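/- arXiv:2305.05828 — 7 statements merged into one kernel-verified Lean document; each statement's English description precedes it below -/
import Mathlib

section
/- Suppose that each g^k satisfies E[g^k | 𝓕_k] = ∇f(x^k) almost surely and E[‖e^k‖²] ≤ σ_k² for given σ_k ≥ 0, and that there is a sequence {β_k} of positive reals which is non-decreasing for all sufficiently large k and satisfies Σ_{k=0}^∞ α_k² β_k² σ_k² < ∞. Let {n_k} ⊂ ℕ be a strictly increasing sequence and define r_k := max_{n_k < j ≤ n_{k+1}} ‖Σ_{i=n_k}^{j−1} α_i e^i‖. Then Σ_{k=0}^∞ β_{n_k}² r_k² < ∞ almost surely. -/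
open MeasureTheory Filter Real Set Topology
open scoped ENNReal NNReal

variable {d : ℕ}

local notation "E" => EuclideanSpace ℝ (Fin d)
local notation "⟪" x ", " y "⟫" => @inner ℝ _ _ x y

/-- The normal map `F_nor(z) = ∇f(prox z) + (z - prox z)/λ`. -/
noncomputable def Fnor (f' prox : E → E) (lam : ℝ) (z : E) : E :=
  f' (prox z) + lam⁻¹ • (z - prox z)

/-- The natural residual `F_nat(x) = x - prox(x - λ ∇f x)`. -/
noncomputable def Fnat (f' prox : E → E) (lam : ℝ) (x : E) : E :=
  x - prox (x - lam • f' x)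

/-- The convex subdifferential of an `EReal`-valued function. -/
def subdiff (φ : E → EReal) (x : E) : Set E :=
  {v : E | ∀ y : E, φ x + ((⟪v, y - x⟫ : ℝ) : EReal) ≤ φ y}

/-- The real value of `ψ = f + φ` (finite on the effective domain of `φ`). -/
noncomputable def psiR (f : E → ℝ) (φ : E → EReal) (x : E) : ℝ :=
  f x + (φ x).toReal

/-- The merit function `H_ξ(z) = ψ(prox z) + (ξ λ / 2) ‖F_nor z‖²`. -/
noncomputable def Hmer (f : E → ℝ) (φ : E → EReal) (f' prox : E → E) (lam ξ : ℝ) (z : E) : ℝ :=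
  psiR f φ (prox z) + ξ * lam / 2 * ‖Fnor f' prox lam z‖ ^ 2

/-- The KL inequality at `xbar` with desingularizing function `s ↦ c s^(1-θ)`. -/
def KLAt (f : E → ℝ) (f' : E → E) (φ : E → EReal) (c θ : ℝ) (xbar : E) : Prop :=
  ∃ η > (0 : ℝ), ∃ U ∈ nhds xbar, ∀ v ∈ U,
    0 < |psiR f φ v - psiR f φ xbar| → |psiR f φ v - psiR f φ xbar| < η →
      ∀ w ∈ subdiff φ v,
        1 ≤ c * (1 - θ) * |psiR f φ v - psiR f φ xbar| ^ (-θ) * ‖f' v + w‖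

/-!
The partial sums `S j = ∑_{i ∈ [n_k, j)} α_i e^i` form a martingale: the proximal map is
Lipschitz, so the iterates `x^k` are `𝓕_k`-measurable, and then `E[e^k | 𝓕_k] = 0`. Doob's `L²`
inequality together with the orthogonality of martingale increments gives
`E[r_k²] ≤ 4 ∑_{i ∈ [n_k, n_{k+1})} α_i² σ_i²`. Once `n_k` is past the point from which `β` is
non-decreasing, `β_{n_k}² ≤ β_i²` on the whole block, so the blocks sum to at most
`4 ∑ α_i² β_i² σ_i² < ∞`. Hence `E[∑_k β_{n_k}² r_k²] < ∞`, and the series converges almost surely.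
-/

section Prox

variable {F : Type*} [NormedAddCommGroup F] [InnerProductSpace ℝ F]

def IsProxPoint (φ : F → EReal) (lam : ℝ) (u p : F) : Prop :=
  ∀ v, φ p + ((‖u - p‖ ^ 2 / (2 * lam) : ℝ) : EReal)
    ≤ φ v + ((‖u - v‖ ^ 2 / (2 * lam) : ℝ) : EReal)

lemma norm_sub_midpoint_sq (u p q : F) :
    ‖u - ((2⁻¹ : ℝ) • p + (2⁻¹ : ℝ) • q)‖ ^ 2
      = (2 * ‖u - p‖ ^ 2 + 2 * ‖u - q‖ ^ 2 - ‖p - q‖ ^ 2) / 4 := by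
  have := parallelogram_law_with_norm ℝ (u - p) (u - q)
  rw [show u - ((2⁻¹ : ℝ) • p + (2⁻¹ : ℝ) • q) = (2⁻¹ : ℝ) • ((u - p) + (u - q)) by module,
    show p - q = (u - q) - (u - p) by abel, norm_sub_rev (u - q), norm_smul, mul_pow,
    show ‖(2⁻¹ : ℝ)‖ ^ 2 = 1 / 4 by norm_num]
  linarith

/-- Test the minimality of `p` against the midpoint of `p` and `q`. -/
lemma IsProxPoint.quadratic_growth {φ : F → EReal} {lam : ℝ} (hlam : 0 < lam)
    (hφconv : ∀ u v : F, ∀ a b : ℝ, 0 ≤ a → 0 ≤ b → a + b = 1 →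
      φ (a • u + b • v) ≤ (a : EReal) * φ u + (b : EReal) * φ v)
    (hφnebot : ∀ v, φ v ≠ ⊥) {u p q : F} (hp : IsProxPoint φ lam u p) {a b : ℝ}
    (hpa : φ p = a) (hqb : φ q = b) :
    4 * lam * a + 2 * ‖u - p‖ ^ 2 + ‖p - q‖ ^ 2 ≤ 4 * lam * b + 2 * ‖u - q‖ ^ 2 := by
  set m : F := (2⁻¹ : ℝ) • p + (2⁻¹ : ℝ) • q
  have hconv : φ m ≤ ((a + b) / 2 : ℝ) := by
    refine (hφconv p q 2⁻¹ 2⁻¹ (by norm_num) (by norm_num) (by norm_num)).trans_eq ?_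
    rw [hpa, hqb]
    norm_cast
    ring
  obtain ⟨c, hmc⟩ : ∃ c : ℝ, φ m = c :=
    ⟨_, (EReal.coe_toReal (ne_top_of_le_ne_top (EReal.coe_ne_top _) hconv) (hφnebot m)).symm⟩
  have hmin := hp m
  rw [hpa, hmc] at hmin
  rw [hmc] at hconv
  norm_cast at hmin hconv
  rw [norm_sub_midpoint_sq] at hmin
  have h2l : 0 < 2 * lam := by positivity
  have key := mul_le_mul_of_nonneg_left hmin h2l.le
  rw [mul_add, mul_add, mul_div_cancel₀ _ h2l.ne', mul_div_cancel₀ _ h2l.ne'] at key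
  nlinarith [mul_le_mul_of_nonneg_left hconv hlam.le]

lemma lipschitzWith_two_of_isProxPoint {φ : F → EReal} {lam : ℝ} {prox : F → F}
    (hlam : 0 < lam)
    (hφconv : ∀ u v : F, ∀ a b : ℝ, 0 ≤ a → 0 ≤ b → a + b = 1 →
      φ (a • u + b • v) ≤ (a : EReal) * φ u + (b : EReal) * φ v)
    (hφnebot : ∀ v, φ v ≠ ⊥) (hφnetop : ∃ v, φ v ≠ ⊤)
    (hprox : ∀ u, IsProxPoint φ lam u (prox u)) :
    LipschitzWith 2 prox := by
  obtain ⟨v₀, hv₀⟩ := hφnetop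
  have hfin (u : F) : ∃ a : ℝ, φ (prox u) = a := by
    refine ⟨_, (EReal.coe_toReal (fun htop => ?_) (hφnebot _)).symm⟩
    have h := hprox u v₀
    rw [htop, EReal.top_add_of_ne_bot (EReal.coe_ne_bot _), top_le_iff] at h
    exact EReal.add_ne_top hv₀ (EReal.coe_ne_top _) h
  refine LipschitzWith.of_dist_le_mul fun u v => ?_
  obtain ⟨a, ha⟩ := hfin u
  obtain ⟨b, hb⟩ := hfin v
  have huv := (hprox u).quadratic_growth hlam hφconv hφnebot ha hb
  have hvu := (hprox v).quadratic_growth hlam hφconv hφnebot hb ha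
  have hmono : ‖prox u - prox v‖ ^ 2 ≤ 2 * inner ℝ (u - v) (prox u - prox v) := by
    simp only [norm_sub_sq_real, inner_sub_left, inner_sub_right, real_inner_comm] at huv hvu ⊢
    linarith
  have hcs := real_inner_le_norm (u - v) (prox u - prox v)
  rw [dist_eq_norm, dist_eq_norm, NNReal.coe_ofNat]
  nlinarith [norm_nonneg (prox u - prox v), norm_nonneg (u - v)]

end Prox

theorem Finset.measurable_sup'_apply {α δ ι : Type*} [MeasurableSpace δ] [SemilatticeSup α]
    [MeasurableSpace α] [MeasurableSup₂ α] {s : Finset ι} (hs : s.Nonempty) {f : ι → δ → α}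
    (hf : ∀ i ∈ s, Measurable (f i)) : Measurable fun x => s.sup' hs fun i => f i x := by
  simpa only [← Finset.sup'_apply] using Finset.measurable_sup' hs hf

theorem summable_sum_Ico_of_monotone {v : ℕ → ℝ} (hv : ∀ i, 0 ≤ v i) (hsum : Summable v)
    {n : ℕ → ℕ} (hn : Monotone n) :
    Summable fun k => ∑ i ∈ Finset.Ico (n k) (n (k + 1)), v i := by
  have htel (m : ℕ) : ∑ k ∈ Finset.range m, ∑ i ∈ Finset.Ico (n k) (n (k + 1)), v i
      = ∑ i ∈ Finset.Ico (n 0) (n m), v i := by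
    induction m with
    | zero => simp
    | succ m ih =>
      rw [Finset.sum_range_succ, ih,
        Finset.sum_Ico_consecutive _ (hn (Nat.zero_le m)) (hn m.le_succ)]
  refine summable_of_sum_range_le (c := ∑' i, v i) (fun k => Finset.sum_nonneg fun i _ => hv i)
    fun m => ?_
  rw [htel]
  exact hsum.sum_le_tsum _ fun i _ => hv i

theorem summable_sq_mul_sum_Ico {β w : ℕ → ℝ} (hβ : ∀ i, 0 ≤ β i) (hw : ∀ i, 0 ≤ w i) {K : ℕ}
    (hβmono : MonotoneOn β (Ici K)) (hsum : Summable fun i => β i ^ 2 * w i) {n : ℕ → ℕ}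
    (hn : StrictMono n) :
    Summable fun k => β (n k) ^ 2 * ∑ i ∈ Finset.Ico (n k) (n (k + 1)), w i := by
  refine Summable.of_norm_bounded_eventually_nat (summable_sum_Ico_of_monotone
    (fun i => mul_nonneg (sq_nonneg _) (hw i)) hsum hn.monotone) ?_
  filter_upwards [eventually_ge_atTop K] with k hk
  rw [Real.norm_of_nonneg (mul_nonneg (sq_nonneg _) (Finset.sum_nonneg fun i _ => hw i)),
    Finset.mul_sum]
  refine Finset.sum_le_sum fun i hi => mul_le_mul_of_nonneg_right ?_ (hw i)
  have hKi : K ≤ n k := hk.trans hn.le_apply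
  exact pow_le_pow_left₀ (hβ _) (hβmono hKi (hKi.trans (Finset.mem_Ico.mp hi).1)
    (Finset.mem_Ico.mp hi).1) 2

namespace MeasureTheory

variable {Ω : Type*} {m0 : MeasurableSpace Ω} {μ : Measure Ω}

theorem MemLp.ofReal_integral_norm_sq {F : Type*} [NormedAddCommGroup F] {f : Ω → F}
    (hf : MemLp f 2 μ) :
    ENNReal.ofReal (∫ ω, ‖f ω‖ ^ 2 ∂μ) = ∫⁻ ω, ‖f ω‖ₑ ^ 2 ∂μ := by
  rw [ofReal_integral_eq_lintegral_ofReal ((memLp_two_iff_integrable_sq_norm hf.1).mp hf)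
    (ae_of_all _ fun _ => by positivity)]
  simp_rw [ENNReal.ofReal_pow (norm_nonneg _), ofReal_norm]

theorem memLp_two_of_lintegral_enorm_sq_ne_top {F : Type*} [NormedAddCommGroup F] {f : Ω → F}
    (hf : AEStronglyMeasurable f μ) (hfin : ∫⁻ ω, ‖f ω‖ₑ ^ 2 ∂μ ≠ ∞) : MemLp f 2 μ := by
  refine ⟨hf, (eLpNorm_lt_top_iff_lintegral_rpow_enorm_lt_top two_ne_zero
    ENNReal.ofNat_ne_top).mpr ?_⟩
  simpa using hfin.lt_top

theorem MemLp.integrable_inner {F : Type*} [NormedAddCommGroup F] [InnerProductSpace ℝ F]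
    {f g : Ω → F} (hf : MemLp f 2 μ) (hg : MemLp g 2 μ) :
    Integrable (fun ω => inner ℝ (f ω) (g ω)) μ := by
  refine (((memLp_two_iff_integrable_sq_norm hf.1).mp hf).add
    ((memLp_two_iff_integrable_sq_norm hg.1).mp hg)).mono' (hf.1.inner hg.1)
    (ae_of_all _ fun ω => ?_)
  rw [Real.norm_eq_abs, Pi.add_apply]
  nlinarith [abs_real_inner_le_norm (f ω) (g ω), norm_nonneg (f ω), norm_nonneg (g ω)]

theorem condExp_sub_ae_eq_zero {F : Type*} [NormedAddCommGroup F] [NormedSpace ℝ F]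
    [CompleteSpace F] [IsFiniteMeasure μ] {m : MeasurableSpace Ω} (hm : m ≤ m0) {g h : Ω → F}
    (hg : Integrable g μ) (hh : StronglyMeasurable[m] h) (hgh : μ[g|m] =ᵐ[μ] h) :
    μ[g - h|m] =ᵐ[μ] 0 := by
  have hhint : Integrable h μ := integrable_condExp.congr hgh
  filter_upwards [condExp_sub hg hhint m, hgh] with ω hsub hω
  rw [hsub, Pi.sub_apply, hω, condExp_of_stronglyMeasurable hm hh hhint, sub_self,
    Pi.zero_apply]

theorem Martingale.submartingale_norm {ι F : Type*} [Preorder ι] {𝒢 : Filtration ι m0}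
    [NormedAddCommGroup F] [NormedSpace ℝ F] [CompleteSpace F] {f : ι → Ω → F}
    (hf : Martingale f 𝒢 μ) : Submartingale (fun i ω => ‖f i ω‖) 𝒢 μ :=
  ⟨fun i => (hf.stronglyAdapted i).norm,
    fun i j hij => by
      filter_upwards [hf.condExp_ae_eq hij, norm_condExp_le (μ := μ) (m := 𝒢 i) (f j)]
        with ω hω hle
      rwa [← hω],
    fun i => (hf.integrable i).norm⟩

/-- **Doob's `L²` inequality**. -/
theorem Submartingale.lintegral_sup'_sq_le [IsFiniteMeasure μ] {𝒢 : Filtration ℕ m0}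
    {f : ℕ → Ω → ℝ} (hsub : Submartingale f 𝒢 μ) (hnonneg : 0 ≤ f) (hL2 : ∀ i, MemLp (f i) 2 μ)
    (N : ℕ) :
    ∫⁻ ω, ENNReal.ofReal ((Finset.range (N + 1)).sup' Finset.nonempty_range_add_one
        fun k => f k ω) ^ 2 ∂μ
      ≤ 4 * ∫⁻ ω, ENNReal.ofReal (f N ω) ^ 2 ∂μ := by
  set M : Ω → ℝ := fun ω => (Finset.range (N + 1)).sup' Finset.nonempty_range_add_one
    fun k => f k ω
  have hfm (k : ℕ) : Measurable (f k) := ((hsub.stronglyMeasurable k).mono (𝒢.le k)).measurable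
  have hMm : Measurable M := Finset.measurable_range_sup'' fun k _ => hfm k
  have hM0 (ω : Ω) : 0 ≤ M ω := (hnonneg 0 ω).trans (Finset.le_sup' (fun k => f k ω) (by simp))
  set A := ∫⁻ ω, ENNReal.ofReal (M ω) ^ 2 ∂μ
  set B := ∫⁻ ω, ENNReal.ofReal (f N ω) ^ 2 ∂μ
  have hA : A ≠ ∞ := by
    have hsq (k : ℕ) : ∫⁻ ω, ENNReal.ofReal (f k ω) ^ 2 ∂μ ≠ ∞ := by
      simp_rw [← Real.enorm_eq_ofReal (hnonneg k _), ← (hL2 k).ofReal_integral_norm_sq]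
      exact ENNReal.ofReal_ne_top
    refine ne_top_of_le_ne_top (ENNReal.sum_ne_top.mpr fun k _ => hsq k)
      ((lintegral_mono fun ω => ?_).trans_eq (lintegral_finsetSum (Finset.range (N + 1))
        fun k _ => (hfm k).ennreal_ofReal.pow_const 2))
    obtain ⟨j, hj, hMj⟩ :=
      Finset.exists_mem_eq_sup' (Finset.nonempty_range_add_one (n := N)) fun k => f k ω
    rw [show M ω = f j ω from hMj]
    exact Finset.single_le_sum (f := fun k => ENNReal.ofReal (f k ω) ^ 2) (fun _ _ => zero_le) hj
  -- Layer cake for `μ` and for `ν = f N • μ`, with the maximal inequality in between.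
  set ν := μ.withDensity fun ω => ENNReal.ofReal (f N ω)
  have htail (t : ℝ) (ht : 0 < t) : μ {ω | t ≤ M ω} * ENNReal.ofReal t ≤ ν {ω | t ≤ M ω} := by
    have hmax := maximal_ineq hsub hnonneg (ε := t.toNNReal) N
    rw [Real.coe_toNNReal _ ht.le] at hmax
    rw [withDensity_apply _ (measurableSet_le measurable_const hMm),
      ← ofReal_integral_eq_lintegral_ofReal (hsub.integrable N).integrableOn
        (ae_of_all _ (hnonneg N)), mul_comm]
    exact hmax
  have hAXM : 2 * A ≤ 4 * ∫⁻ ω, ENNReal.ofReal (f N ω) * ENNReal.ofReal (M ω) ∂μ := by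
    have hlayer : A = 2 * ∫⁻ t in Ioi 0, μ {ω | t ≤ M ω} * ENNReal.ofReal t := by
      have := lintegral_rpow_eq_lintegral_meas_le_mul μ (ae_of_all _ hM0) hMm.aemeasurable
        two_pos
      norm_num at this
      simp_rw [A, ← ENNReal.ofReal_pow (hM0 _)]
      exact this
    calc 2 * A ≤ 2 * (2 * ∫⁻ t in Ioi 0, ν {ω | t ≤ M ω}) := by
          rw [hlayer]
          gcongr 2 * (2 * ?_)
          exact setLIntegral_mono' measurableSet_Ioi htail
      _ = 4 * ∫⁻ ω, ENNReal.ofReal (M ω) ∂ν := by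
          rw [lintegral_eq_lintegral_meas_le ν (ae_of_all _ hM0) hMm.aemeasurable]
          ring
      _ = _ := by
          rw [lintegral_withDensity_eq_lintegral_mul _ (hfm N).ennreal_ofReal
            hMm.ennreal_ofReal]
          rfl
  -- `4 x m ≤ (2 x)² + m²`
  have hamgm : 4 * ∫⁻ ω, ENNReal.ofReal (f N ω) * ENNReal.ofReal (M ω) ∂μ ≤ 4 * B + A := by
    rw [← lintegral_const_mul' _ _ (by norm_num), ← lintegral_const_mul' _ _ (by norm_num),
      ← lintegral_add_left (((hfm N).ennreal_ofReal.pow_const 2).const_mul _)]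
    refine lintegral_mono fun ω => ?_
    have := two_mul_le_add_sq (2 * (f N ω).toNNReal) (M ω).toNNReal
    simp only [ENNReal.ofReal]
    exact_mod_cast (by linear_combination this :
      4 * ((f N ω).toNNReal * (M ω).toNNReal) ≤ 4 * (f N ω).toNNReal ^ 2 + (M ω).toNNReal ^ 2)
  refine ENNReal.le_of_add_le_add_right hA ?_
  rw [← two_mul]
  exact hAXM.trans hamgm

theorem ae_summable_of_lintegral_ofReal_le {X : ℕ → Ω → ℝ} (hX : ∀ k ω, 0 ≤ X k ω)
    (hXm : ∀ k, AEMeasurable (X k) μ) {c : ℕ → ℝ} (hc : Summable c)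
    (hle : ∀ k, ∫⁻ ω, ENNReal.ofReal (X k ω) ∂μ ≤ ENNReal.ofReal (c k)) :
    ∀ᵐ ω ∂μ, Summable fun k => X k ω := by
  have hm (k : ℕ) := (hXm k).ennreal_ofReal
  have hfin : ∫⁻ ω, ∑' k, ENNReal.ofReal (X k ω) ∂μ ≠ ∞ := by
    rw [lintegral_tsum hm]
    exact ne_top_of_le_ne_top hc.tsum_ofReal_ne_top (ENNReal.tsum_le_tsum hle)
  filter_upwards [ae_lt_top' (AEMeasurable.tsum hm) hfin] with ω hω
  simpa only [ENNReal.toReal_ofReal (hX _ ω)] using ENNReal.summable_toReal hω.ne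

section MartingaleDifference

variable {F : Type*} [NormedAddCommGroup F] {𝒢 : Filtration ℕ m0} {u : ℕ → Ω → F}

theorem stronglyMeasurable_sum_Ico (hmeas : ∀ i, StronglyMeasurable[𝒢 (i + 1)] (u i))
    (a j : ℕ) : StronglyMeasurable[𝒢 j] fun ω => ∑ i ∈ Finset.Ico a j, u i ω :=
  Finset.stronglyMeasurable_fun_sum _ fun i hi =>
    (hmeas i).mono (𝒢.mono (Finset.mem_Ico.mp hi).2)

theorem martingale_sum_Ico [NormedSpace ℝ F] [CompleteSpace F] [IsFiniteMeasure μ]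
    (hmeas : ∀ i, StronglyMeasurable[𝒢 (i + 1)] (u i)) (hint : ∀ i, Integrable (u i) μ)
    (hcond : ∀ i, μ[u i|𝒢 i] =ᵐ[μ] 0) (a : ℕ) :
    Martingale (fun j ω => ∑ i ∈ Finset.Ico a j, u i ω) 𝒢 μ := by
  have hS (j : ℕ) : Integrable (fun ω => ∑ i ∈ Finset.Ico a j, u i ω) μ :=
    integrable_finsetSum _ fun i _ => hint i
  refine martingale_nat (stronglyMeasurable_sum_Ico hmeas a) hS fun j => ?_
  rcases lt_or_ge j a with hja | haj
  · simp [Finset.Ico_eq_empty_of_le hja.le, Finset.Ico_eq_empty_of_le (Nat.succ_le_of_lt hja)]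
  · simp_rw [Finset.sum_Ico_succ_top haj]
    have hadd : μ[fun ω => ∑ i ∈ Finset.Ico a j, u i ω + u j ω|𝒢 j]
        =ᵐ[μ] μ[fun ω => ∑ i ∈ Finset.Ico a j, u i ω|𝒢 j] + μ[u j|𝒢 j] :=
      condExp_add (hS j) (hint j) _
    filter_upwards [hadd, hcond j] with ω hadd hzero
    rw [hadd, Pi.add_apply, hzero, Pi.zero_apply, add_zero,
      condExp_of_stronglyMeasurable (𝒢.le j) (stronglyMeasurable_sum_Ico hmeas a j) (hS j)]

variable [InnerProductSpace ℝ F] [CompleteSpace F] [IsFiniteMeasure μ]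

theorem integral_inner_eq_zero_of_condExp_eq_zero {m : MeasurableSpace Ω} (hm : m ≤ m0)
    {S v : Ω → F} (hS : StronglyMeasurable[m] S) (hS2 : MemLp S 2 μ) (hv2 : MemLp v 2 μ)
    (hv : μ[v|m] =ᵐ[μ] 0) :
    ∫ ω, inner ℝ (S ω) (v ω) ∂μ = 0 :=
  calc ∫ ω, inner ℝ (S ω) (v ω) ∂μ = ∫ ω, (μ[fun ω => innerSL ℝ (S ω) (v ω)|m]) ω ∂μ :=
        (integral_condExp hm).symm
    _ = ∫ ω, innerSL ℝ (S ω) ((μ[v|m]) ω) ∂μ :=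
        integral_congr_ae (condExp_bilin_of_stronglyMeasurable_left _ hS
          (hS2.integrable_inner hv2) (hv2.integrable one_le_two))
    _ = ∫ ω, innerSL ℝ (S ω) 0 ∂μ :=
        integral_congr_ae (hv.mono fun ω hω => congrArg (innerSL ℝ (S ω)) hω)
    _ = 0 := by simp

theorem integral_norm_sum_Ico_sq (hmeas : ∀ i, StronglyMeasurable[𝒢 (i + 1)] (u i))
    (hL2 : ∀ i, MemLp (u i) 2 μ) (hcond : ∀ i, μ[u i|𝒢 i] =ᵐ[μ] 0) {a b : ℕ} (hab : a ≤ b) :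
    ∫ ω, ‖∑ i ∈ Finset.Ico a b, u i ω‖ ^ 2 ∂μ = ∑ i ∈ Finset.Ico a b, ∫ ω, ‖u i ω‖ ^ 2 ∂μ := by
  induction b, hab using Nat.le_induction with
  | base => simp
  | succ b hab ih =>
    have hS2 : MemLp (fun ω => ∑ i ∈ Finset.Ico a b, u i ω) 2 μ :=
      memLp_finsetSum _ fun i _ => hL2 i
    have hsq (f : Ω → F) (hf : MemLp f 2 μ) : Integrable (fun ω => ‖f ω‖ ^ 2) μ :=
      (memLp_two_iff_integrable_sq_norm hf.1).mp hf
    have hcross := integral_inner_eq_zero_of_condExp_eq_zero (𝒢.le b)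
      (stronglyMeasurable_sum_Ico hmeas a b) hS2 (hL2 b) (hcond b)
    simp_rw [Finset.sum_Ico_succ_top hab, norm_add_sq_real]
    rw [integral_add ((hsq _ hS2).fun_add ((hS2.integrable_inner (hL2 b)).const_mul 2))
        (hsq _ (hL2 b)),
      integral_add (hsq _ hS2) ((hS2.integrable_inner (hL2 b)).const_mul 2), integral_const_mul,
      hcross, ih]
    ring

theorem lintegral_sup'_norm_sum_Ico_sq_le (hmeas : ∀ i, StronglyMeasurable[𝒢 (i + 1)] (u i))
    (hL2 : ∀ i, MemLp (u i) 2 μ) (hcond : ∀ i, μ[u i|𝒢 i] =ᵐ[μ] 0) {a b : ℕ}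
    (hab : (Finset.Icc (a + 1) b).Nonempty) :
    ∫⁻ ω, ENNReal.ofReal (((Finset.Icc (a + 1) b).sup' hab
        fun j => ‖∑ i ∈ Finset.Ico a j, u i ω‖) ^ 2) ∂μ
      ≤ 4 * ∑ i ∈ Finset.Ico a b, ∫⁻ ω, ‖u i ω‖ₑ ^ 2 ∂μ := by
  set S : ℕ → Ω → F := fun j ω => ∑ i ∈ Finset.Ico a j, u i ω
  have hS2 (j : ℕ) : MemLp (S j) 2 μ := memLp_finsetSum _ fun i _ => hL2 i
  have hdoob := ((martingale_sum_Ico hmeas (fun i => (hL2 i).integrable one_le_two) hcond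
    a).submartingale_norm).lintegral_sup'_sq_le (fun _ _ => norm_nonneg _)
    (fun j => (hS2 j).norm) b
  calc _ ≤ ∫⁻ ω, ENNReal.ofReal ((Finset.range (b + 1)).sup' Finset.nonempty_range_add_one
          fun j => ‖S j ω‖) ^ 2 ∂μ := by
        refine lintegral_mono fun ω => ?_
        rw [ENNReal.ofReal_pow
          (Finset.le_sup'_of_le (fun j => ‖S j ω‖) hab.choose_spec (norm_nonneg _))]
        gcongr
        exact Finset.sup'_mono _
          (fun j => by simp only [Finset.mem_Icc, Finset.mem_range]; omega) hab
    _ ≤ 4 * ∫⁻ ω, ‖S b ω‖ₑ ^ 2 ∂μ := by simpa only [ofReal_norm] using hdoob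
    _ = 4 * ∑ i ∈ Finset.Ico a b, ∫⁻ ω, ‖u i ω‖ₑ ^ 2 ∂μ := by
        rw [← (hS2 b).ofReal_integral_norm_sq, integral_norm_sum_Ico_sq hmeas hL2 hcond
          (by simp at hab; omega), ENNReal.ofReal_sum_of_nonneg fun i _ => by positivity]
        simp_rw [(hL2 _).ofReal_integral_norm_sq]

theorem lintegral_sup'_norm_sum_Ico_smul_sq_le (α σ : ℕ → ℝ) {e : ℕ → Ω → F}
    (hmeas : ∀ i, StronglyMeasurable[𝒢 (i + 1)] (e i))
    (hcond : ∀ i, μ[e i|𝒢 i] =ᵐ[μ] 0)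
    (hvar : ∀ i, ∫⁻ ω, ‖e i ω‖ₑ ^ 2 ∂μ ≤ ENNReal.ofReal (σ i ^ 2)) {a b : ℕ}
    (hab : (Finset.Icc (a + 1) b).Nonempty) :
    ∫⁻ ω, ENNReal.ofReal (((Finset.Icc (a + 1) b).sup' hab
        fun j => ‖∑ i ∈ Finset.Ico a j, α i • e i ω‖) ^ 2) ∂μ
      ≤ ENNReal.ofReal (4 * ∑ i ∈ Finset.Ico a b, α i ^ 2 * σ i ^ 2) := by
  have hL2 (i : ℕ) : MemLp (e i) 2 μ :=
    memLp_two_of_lintegral_enorm_sq_ne_top ((hmeas i).mono (𝒢.le _)).aestronglyMeasurable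
      (ne_top_of_le_ne_top ENNReal.ofReal_ne_top (hvar i))
  have hcond' (i : ℕ) : μ[α i • e i|𝒢 i] =ᵐ[μ] 0 := by
    filter_upwards [condExp_smul (α i) (e i) (𝒢 i), hcond i] with ω hsmul hzero
    rw [hsmul, Pi.smul_apply, hzero, Pi.zero_apply, smul_zero]
  refine (lintegral_sup'_norm_sum_Ico_sq_le (fun i => (hmeas i).const_smul (α i))
    (fun i => (hL2 i).const_smul (α i)) hcond' hab).trans ?_
  rw [ENNReal.ofReal_mul (by norm_num), ENNReal.ofReal_sum_of_nonneg fun i _ => by positivity,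
    ENNReal.ofReal_ofNat]
  gcongr with i
  calc ∫⁻ ω, ‖(α i • e i) ω‖ₑ ^ 2 ∂μ = ‖α i‖ₑ ^ 2 * ∫⁻ ω, ‖e i ω‖ₑ ^ 2 ∂μ := by
        simp_rw [Pi.smul_apply, enorm_smul, mul_pow]
        exact lintegral_const_mul' _ _ (by simp)
    _ ≤ ‖α i‖ₑ ^ 2 * ENNReal.ofReal (σ i ^ 2) := by gcongr; exact hvar i
    _ = ENNReal.ofReal (α i ^ 2 * σ i ^ 2) := by
        rw [ENNReal.ofReal_mul (sq_nonneg _), ← ofReal_norm, ← ENNReal.ofReal_pow (norm_nonneg _),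
          Real.norm_eq_abs, sq_abs]

theorem ae_summable_sq_mul_sup'_norm_sum_Ico_sq (α σ β : ℕ → ℝ) {e : ℕ → Ω → F}
    (hmeas : ∀ i, StronglyMeasurable[𝒢 (i + 1)] (e i)) (hcond : ∀ i, μ[e i|𝒢 i] =ᵐ[μ] 0)
    (hvar : ∀ i, ∫⁻ ω, ‖e i ω‖ₑ ^ 2 ∂μ ≤ ENNReal.ofReal (σ i ^ 2)) (hβ : ∀ i, 0 ≤ β i) {K : ℕ}
    (hβmono : MonotoneOn β (Ici K)) (hsum : Summable fun i => α i ^ 2 * β i ^ 2 * σ i ^ 2)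
    {n : ℕ → ℕ} (hn : StrictMono n) :
    ∀ᵐ ω ∂μ, Summable fun k => β (n k) ^ 2 *
      ((Finset.Icc (n k + 1) (n (k + 1))).sup' (Finset.nonempty_Icc.mpr (hn (Nat.lt_succ_self k)))
        fun j => ‖∑ i ∈ Finset.Ico (n k) j, α i • e i ω‖) ^ 2 := by
  refine ae_summable_of_lintegral_ofReal_le
    (c := fun k => 4 * (β (n k) ^ 2 * ∑ i ∈ Finset.Ico (n k) (n (k + 1)), α i ^ 2 * σ i ^ 2))
    (fun k ω => by positivity) (fun k => ?_) ?_ (fun k => ?_)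
  · have hu (i : ℕ) : StronglyMeasurable[𝒢 (i + 1)] (α i • e i) := (hmeas i).const_smul (α i)
    exact (((Finset.measurable_sup'_apply _ fun j _ =>
      ((stronglyMeasurable_sum_Ico hu (n k) j).mono (𝒢.le j)).norm.measurable).pow_const
        2).const_mul _).aemeasurable
  · exact (summable_sq_mul_sum_Ico hβ (fun i => by positivity) hβmono
      (hsum.congr fun i => by ring) hn).mul_left 4
  · simp_rw [ENNReal.ofReal_mul (sq_nonneg _)]
    rw [lintegral_const_mul' _ _ ENNReal.ofReal_ne_top, mul_left_comm,
      ENNReal.ofReal_mul (sq_nonneg _)]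
    gcongr
    exact lintegral_sup'_norm_sum_Ico_smul_sq_le α σ hmeas hcond hvar _

end MartingaleDifference

end MeasureTheory

theorem stronglyAdapted_normSGD {F Ω : Type*} [NormedAddCommGroup F] [NormedSpace ℝ F]
    {m0 : MeasurableSpace Ω} {𝓕 : Filtration ℕ m0} {prox : F → F} (hprox : Continuous prox)
    {lam : ℝ} {α : ℕ → ℝ} {z x g : ℕ → Ω → F} {z0 : F} (hz0 : ∀ ω, z 0 ω = z0)
    (hx : ∀ k ω, x k ω = prox (z k ω))
    (hzrec : ∀ k ω, z (k + 1) ω = z k ω - α k • (g k ω + lam⁻¹ • (z k ω - x k ω)))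
    (hgmeas : ∀ k, StronglyMeasurable[𝓕 (k + 1)] (g k)) :
    StronglyAdapted 𝓕 x := by
  have hxz (k : ℕ) : x k = prox ∘ z k := funext (hx k)
  suffices hz : StronglyAdapted 𝓕 z from fun k => hxz k ▸ hprox.comp_stronglyMeasurable (hz k)
  intro k
  induction k with
  | zero => exact (funext hz0 : z 0 = fun _ => z0) ▸ stronglyMeasurable_const
  | succ k ih =>
    have hz : StronglyMeasurable[𝓕 (k + 1)] (z k) := ih.mono (𝓕.mono k.le_succ)
    have hxk : StronglyMeasurable[𝓕 (k + 1)] (x k) := hxz k ▸ hprox.comp_stronglyMeasurable hz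
    rw [show z (k + 1) = fun ω => z k ω - α k • (g k ω + lam⁻¹ • (z k ω - x k ω)) from
      funext (hzrec k)]
    exact hz.sub (((hgmeas k).add ((hz.sub hxk).const_smul lam⁻¹)).const_smul (α k))

theorem stmt2_general
    (f' : E → E) (φ : E → EReal) (prox : E → E) (lam : ℝ)
    (hlam : 0 < lam)
    (hf'cont : Continuous f')
    (hφconv : ∀ u v : E, ∀ a b : ℝ, 0 ≤ a → 0 ≤ b → a + b = 1 →
      φ (a • u + b • v) ≤ (a : EReal) * φ u + (b : EReal) * φ v)
    (hφnebot : ∀ v : E, φ v ≠ ⊥) (hφnetop : ∃ v : E, φ v ≠ ⊤)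
    (hprox : ∀ u v : E,
      φ (prox u) + ((‖u - prox u‖ ^ 2 / (2 * lam) : ℝ) : EReal)
        ≤ φ v + ((‖u - v‖ ^ 2 / (2 * lam) : ℝ) : EReal))
    {Ω : Type} [m0 : MeasurableSpace Ω] (P : Measure Ω) [IsProbabilityMeasure P]
    (𝓕 : Filtration ℕ m0)
    (α : ℕ → ℝ)
    (z x g e : ℕ → Ω → E) (z0 : E)
    (hz0 : ∀ ω, z 0 ω = z0)
    (hx : ∀ k ω, x k ω = prox (z k ω))
    (hzrec : ∀ k ω, z (k + 1) ω = z k ω - α k • (g k ω + lam⁻¹ • (z k ω - x k ω)))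
    (he : ∀ k ω, e k ω = g k ω - f' (x k ω))
    (hgmeas : ∀ k, StronglyMeasurable[𝓕 (k + 1)] (g k))
    (hgL2 : ∀ k, MemLp (g k) 2 P)
    (σ : ℕ → ℝ)
    (hunbiased : ∀ k, P[g k|𝓕 k] =ᵐ[P] fun ω => f' (x k ω))
    (hvar : ∀ k, ∫⁻ ω, (‖e k ω‖₊ : ℝ≥0∞) ^ 2 ∂P ≤ ENNReal.ofReal ((σ k) ^ 2))
    (β : ℕ → ℝ) (hβpos : ∀ k, 0 < β k)
    (hβmono : ∃ K : ℕ, ∀ k ≥ K, β k ≤ β (k + 1))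
    (hsum : Summable fun k => (α k) ^ 2 * (β k) ^ 2 * (σ k) ^ 2)
    (n : ℕ → ℕ) (hn : StrictMono n) :
    ∀ᵐ ω ∂P, Summable fun k =>
      (β (n k)) ^ 2 *
        ((Finset.Icc (n k + 1) (n (k + 1))).sup'
            (Finset.nonempty_Icc.mpr (hn (Nat.lt_succ_self k)))
            (fun j => ‖∑ i ∈ Finset.Ico (n k) j, α i • e i ω‖)) ^ 2 := by
  obtain ⟨K, hK⟩ := hβmono
  have hxmeas := stronglyAdapted_normSGD
    (lipschitzWith_two_of_isProxPoint hlam hφconv hφnebot hφnetop hprox).continuous hz0 hx hzrec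
    hgmeas
  have hfx (k : ℕ) : StronglyMeasurable[𝓕 k] fun ω => f' (x k ω) :=
    hf'cont.comp_stronglyMeasurable (hxmeas k)
  have he_eq (k : ℕ) : e k = g k - fun ω => f' (x k ω) := funext (he k)
  have hemeas (k : ℕ) : StronglyMeasurable[𝓕 (k + 1)] (e k) :=
    he_eq k ▸ (hgmeas k).sub ((hfx k).mono (𝓕.mono k.le_succ))
  have hecond (k : ℕ) : P[e k|𝓕 k] =ᵐ[P] 0 :=
    he_eq k ▸ condExp_sub_ae_eq_zero (𝓕.le k) ((hgL2 k).integrable one_le_two) (hfx k)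
      (hunbiased k)
  exact ae_summable_sq_mul_sup'_norm_sum_Ico_sq α σ β hemeas hecond hvar (fun k => (hβpos k).le)
    (monotoneOn_nat_Ici_of_le_succ hK) hsum hn

theorem stmt2
    (f : E → ℝ) (f' : E → E) (φ : E → EReal) (prox : E → E) (lam : ℝ)
    (hlam : 0 < lam)
    (hf : ∀ v : E, HasGradientAt f (f' v) v) (hf'cont : Continuous f')
    (hφconv : ∀ u v : E, ∀ a b : ℝ, 0 ≤ a → 0 ≤ b → a + b = 1 →
      φ (a • u + b • v) ≤ (a : EReal) * φ u + (b : EReal) * φ v)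
    (hφlsc : LowerSemicontinuous φ)
    (hφnebot : ∀ v : E, φ v ≠ ⊥) (hφnetop : ∃ v : E, φ v ≠ ⊤)
    (hprox : ∀ u v : E,
      φ (prox u) + ((‖u - prox u‖ ^ 2 / (2 * lam) : ℝ) : EReal)
        ≤ φ v + ((‖u - v‖ ^ 2 / (2 * lam) : ℝ) : EReal))
    {Ω : Type} [m0 : MeasurableSpace Ω] (P : Measure Ω) [IsProbabilityMeasure P]
    (𝓕 : Filtration ℕ m0)
    (α : ℕ → ℝ) (hα : ∀ k, 0 < α k)
    (z x g e : ℕ → Ω → E) (z0 : E)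
    (hz0 : ∀ ω, z 0 ω = z0)
    (hx : ∀ k ω, x k ω = prox (z k ω))
    (hzrec : ∀ k ω, z (k + 1) ω = z k ω - α k • (g k ω + lam⁻¹ • (z k ω - x k ω)))
    (he : ∀ k ω, e k ω = g k ω - f' (x k ω))
    (hgmeas : ∀ k, StronglyMeasurable[𝓕 (k + 1)] (g k))
    (hgL2 : ∀ k, MemLp (g k) 2 P)
    (σ : ℕ → ℝ) (hσ : ∀ k, 0 ≤ σ k)
    (hunbiased : ∀ k, P[g k|𝓕 k] =ᵐ[P] fun ω => f' (x k ω))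
    (hvar : ∀ k, ∫⁻ ω, (‖e k ω‖₊ : ℝ≥0∞) ^ 2 ∂P ≤ ENNReal.ofReal ((σ k) ^ 2))
    (β : ℕ → ℝ) (hβpos : ∀ k, 0 < β k)
    (hβmono : ∃ K : ℕ, ∀ k ≥ K, β k ≤ β (k + 1))
    (hsum : Summable fun k => (α k) ^ 2 * (β k) ^ 2 * (σ k) ^ 2)
    (n : ℕ → ℕ) (hn : StrictMono n) :
    ∀ᵐ ω ∂P, Summable fun k =>
      (β (n k)) ^ 2 *
        ((Finset.Icc (n k + 1) (n (k + 1))).sup'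
            (Finset.nonempty_Icc.mpr (hn (Nat.lt_succ_self k)))
            (fun j => ‖∑ i ∈ Finset.Ico (n k) j, α i • e i ω‖)) ^ 2 :=
  stmt2_general f' φ prox lam hlam hf'cont hφconv hφnebot hφnetop hprox (m0 := m0) P 𝓕 α z x g e z0
    hz0 hx hzrec he hgmeas hgL2 σ hunbiased hvar β hβpos hβmono hsum n hn
end

section
/- Suppose there is L ≥ 0 such that ‖∇f(u) − ∇f(v)‖ ≤ L‖u − v‖ for all u, v in the closed convex hull of {x^k : k ∈ ℕ}. Then for all natural numbers 0 ≤ m < n, writing τ := τ_{m,n} and τ̄ := (L + 2/λ)·exp((L + 2/λ)·τ), it holds that d_{m,n} ≤ max_{m < i ≤ n} ‖z^i − z^m‖ ≤ (1 + τ·τ̄)·(τ·‖F_nor(z^m)‖ + s_{m,n}), and ‖e^{m,n}‖ ≤ τ̄·τ²·‖F_nor(z^m)‖ + (1 + τ̄·τ)·s_{m,n}. -/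
open MeasureTheory Filter Real Set Topology
open scoped ENNReal NNReal

variable {d : ℕ}

local notation "E" => EuclideanSpace ℝ (Fin d)
local notation "⟪" x ", " y "⟫" => @inner ℝ _ _ x y

/-!
The prox map is firmly nonexpansive, so the normal map is `(L + 2/λ)`-Lipschitz along the
trajectory. Summing the recursion `z^{k+1} = z^k - α_k (F_nor(z^k) + e^k)` gives
`z^j - z^m + τ_{m,j} F_nor(z^m) = Σ α_i (F_nor(z^m) - F_nor(z^i)) - Σ α_i e^i`, so
`‖z^j - z^m‖ ≤ τ ‖F_nor(z^m)‖ + s + (L + 2/λ) Σ α_i ‖z^i - z^m‖`. A discrete Grönwall inequality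
turns this into `‖z^j - z^m‖ ≤ (τ ‖F_nor(z^m)‖ + s) e^{(L + 2/λ) τ}`, and `e^t ≤ 1 + t e^t` together
with the same identity at `j = n` gives both estimates.
-/

theorem Real.exp_le_one_add_mul_exp (x : ℝ) : exp x ≤ 1 + x * exp x := by
  have h := mul_le_mul_of_nonneg_left (Real.one_sub_le_exp_neg x) (exp_pos x).le
  rw [← exp_add, add_neg_cancel, exp_zero] at h
  linarith

theorem le_mul_exp_sum_of_le_add_sum {u c : ℕ → ℝ} {A : ℝ} {m n : ℕ} (hA : 0 ≤ A)
    (hc : ∀ i, 0 ≤ c i) (hu : ∀ j ∈ Set.Icc m n, u j ≤ A + ∑ i ∈ Finset.Ico m j, c i * u i)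
    {j : ℕ} (hj : j ∈ Set.Icc m n) : u j ≤ A * exp (∑ i ∈ Finset.Ico m j, c i) := by
  have hprod : A + ∑ i ∈ Finset.Ico m j, c i * u i ≤ A * ∏ i ∈ Finset.Ico m j, (1 + c i) := by
    obtain ⟨hmj, hjn⟩ := hj
    induction j, hmj using Nat.le_induction with
    | base => simp
    | succ k hmk ih =>
      have hk := hu k ⟨hmk, by omega⟩
      have ih := ih (by omega)
      rw [Finset.sum_Ico_succ_top hmk, Finset.prod_Ico_succ_top hmk]
      nlinarith [hc k]
  calc u j ≤ A + ∑ i ∈ Finset.Ico m j, c i * u i := hu j hj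
    _ ≤ A * ∏ i ∈ Finset.Ico m j, (1 + c i) := hprod
    _ ≤ A * exp (∑ i ∈ Finset.Ico m j, c i) :=
      mul_le_mul_of_nonneg_left (Real.prod_one_add_le_exp_sum _ hc) hA

section Trajectory

variable {V : Type*} [NormedAddCommGroup V] [NormedSpace ℝ V] {z G e : ℕ → V} {α : ℕ → ℝ}
  {m n : ℕ}

theorem sub_add_sum_smul_eq (hstep : ∀ k, z (k + 1) = z k - α k • (G k + e k)) {j : ℕ}
    (hmj : m ≤ j) :
    z j - z m + (∑ i ∈ Finset.Ico m j, α i) • G m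
      = ∑ i ∈ Finset.Ico m j, α i • (G m - G i) - ∑ i ∈ Finset.Ico m j, α i • e i := by
  induction j, hmj using Nat.le_induction with
  | base => simp
  | succ k hmk ih =>
    rw [Finset.sum_Ico_succ_top hmk, Finset.sum_Ico_succ_top hmk, Finset.sum_Ico_succ_top hmk,
      hstep]
    linear_combination (norm := module) ih

theorem norm_sub_add_sum_smul_le (hstep : ∀ k, z (k + 1) = z k - α k • (G k + e k))
    (hα : ∀ i, 0 ≤ α i) {C : ℝ} {j : ℕ} (hmj : m ≤ j)
    (hG : ∀ i ∈ Finset.Ico m j, ‖G m - G i‖ ≤ C * ‖z i - z m‖) :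
    ‖z j - z m + (∑ i ∈ Finset.Ico m j, α i) • G m‖
      ≤ C * ∑ i ∈ Finset.Ico m j, α i * ‖z i - z m‖ + ‖∑ i ∈ Finset.Ico m j, α i • e i‖ := by
  rw [sub_add_sum_smul_eq hstep hmj, Finset.mul_sum]
  refine (norm_sub_le _ _).trans (add_le_add_left ?_ _)
  refine (norm_sum_le _ _).trans (Finset.sum_le_sum fun i hi => ?_)
  rw [norm_smul, Real.norm_of_nonneg (hα i), mul_left_comm]
  exact mul_le_mul_of_nonneg_left (hG i hi) (hα i)

variable {C s : ℝ}

theorem norm_sub_le_mul_exp (hstep : ∀ k, z (k + 1) = z k - α k • (G k + e k))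
    (hα : ∀ i, 0 ≤ α i) (hC : 0 ≤ C)
    (hG : ∀ i ∈ Finset.Ico m n, ‖G m - G i‖ ≤ C * ‖z i - z m‖)
    (hs : ∀ j ∈ Set.Icc m n, ‖∑ i ∈ Finset.Ico m j, α i • e i‖ ≤ s) {j : ℕ}
    (hj : j ∈ Set.Icc m n) :
    ‖z j - z m‖
      ≤ ((∑ i ∈ Finset.Ico m n, α i) * ‖G m‖ + s) * exp (C * ∑ i ∈ Finset.Ico m n, α i) := by
  set τ := ∑ i ∈ Finset.Ico m n, α i
  have hτ : ∀ j ≤ n, ∑ i ∈ Finset.Ico m j, α i ≤ τ := fun j hjn =>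
    Finset.sum_le_sum_of_subset_of_nonneg (Finset.Ico_subset_Ico_right hjn) fun i _ _ => hα i
  have hs0 : 0 ≤ s := by simpa using hs m ⟨le_rfl, hj.1.trans hj.2⟩
  have hA : 0 ≤ τ * ‖G m‖ + s := by
    have := Finset.sum_nonneg fun i (_ : i ∈ Finset.Ico m n) => hα i
    positivity
  have hgron : ∀ j ∈ Set.Icc m n,
      ‖z j - z m‖ ≤ τ * ‖G m‖ + s + ∑ i ∈ Finset.Ico m j, C * α i * ‖z i - z m‖ := by
    intro j ⟨hmj, hjn⟩
    have hwin := norm_sub_add_sum_smul_le hstep hα hmj fun i hi =>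
      hG i (Finset.Ico_subset_Ico_right hjn hi)
    have hdrift : ‖(∑ i ∈ Finset.Ico m j, α i) • G m‖ ≤ τ * ‖G m‖ := by
      rw [norm_smul, Real.norm_of_nonneg (Finset.sum_nonneg fun i _ => hα i)]
      exact mul_le_mul_of_nonneg_right (hτ j hjn) (norm_nonneg _)
    simp_rw [mul_assoc, ← Finset.mul_sum]
    linarith [norm_le_add_norm_add (z j - z m) ((∑ i ∈ Finset.Ico m j, α i) • G m),
      hs j ⟨hmj, hjn⟩]
  refine (le_mul_exp_sum_of_le_add_sum hA (fun i => mul_nonneg hC (hα i)) hgron hj).trans ?_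
  rw [← Finset.mul_sum]
  gcongr
  exact hτ j hj.2

theorem norm_sub_add_sum_smul_le_mul_exp (hstep : ∀ k, z (k + 1) = z k - α k • (G k + e k))
    (hα : ∀ i, 0 ≤ α i) (hC : 0 ≤ C) (hmn : m ≤ n)
    (hG : ∀ i ∈ Finset.Ico m n, ‖G m - G i‖ ≤ C * ‖z i - z m‖)
    (hs : ∀ j ∈ Set.Icc m n, ‖∑ i ∈ Finset.Ico m j, α i • e i‖ ≤ s) :
    ‖z n - z m + (∑ i ∈ Finset.Ico m n, α i) • G m‖
      ≤ C * (∑ i ∈ Finset.Ico m n, α i) * ((∑ i ∈ Finset.Ico m n, α i) * ‖G m‖ + s)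
          * exp (C * ∑ i ∈ Finset.Ico m n, α i) + s := by
  set τ := ∑ i ∈ Finset.Ico m n, α i
  set B := (τ * ‖G m‖ + s) * exp (C * τ)
  have hsum : ∑ i ∈ Finset.Ico m n, α i * ‖z i - z m‖ ≤ τ * B := by
    rw [Finset.sum_mul]
    refine Finset.sum_le_sum fun i hi => mul_le_mul_of_nonneg_left ?_ (hα i)
    obtain ⟨hmi, hin⟩ := Finset.mem_Ico.1 hi
    exact norm_sub_le_mul_exp hstep hα hC hG hs ⟨hmi, hin.le⟩
  calc ‖z n - z m + τ • G m‖
      ≤ C * ∑ i ∈ Finset.Ico m n, α i * ‖z i - z m‖ + ‖∑ i ∈ Finset.Ico m n, α i • e i‖ :=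
        norm_sub_add_sum_smul_le hstep hα hmn hG
    _ ≤ C * (τ * B) + s := by
        gcongr
        exact hs n ⟨hmn, le_rfl⟩
    _ = C * τ * (τ * ‖G m‖ + s) * exp (C * τ) + s := by ring

end Trajectory

theorem apply_smul_add_smul_le_coe {M : Type*} [AddCommMonoid M] [Module ℝ M] {φ : M → EReal}
    (hφconv : ∀ u v : M, ∀ a b : ℝ, 0 ≤ a → 0 ≤ b → a + b = 1 →
      φ (a • u + b • v) ≤ (a : EReal) * φ u + (b : EReal) * φ v)
    (hφnebot : ∀ v : M, φ v ≠ ⊥) {u v : M} (hu : φ u ≠ ⊤) (hv : φ v ≠ ⊤)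
    {a b : ℝ} (ha : 0 ≤ a) (hb : 0 ≤ b) (hab : a + b = 1) :
    φ (a • u + b • v) ≤ ((a * (φ u).toReal + b * (φ v).toReal : ℝ) : EReal) := by
  have h := hφconv u v a b ha hb hab
  rw [← EReal.coe_toReal hu (hφnebot u), ← EReal.coe_toReal hv (hφnebot v)] at h
  exact_mod_cast h

section Prox

variable {H : Type*} [NormedAddCommGroup H]

def IsProxMap (φ : H → EReal) (lam : ℝ) (prox : H → H) : Prop :=
  ∀ u v : H, φ (prox u) + ((‖u - prox u‖ ^ 2 / (2 * lam) : ℝ) : EReal)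
    ≤ φ v + ((‖u - v‖ ^ 2 / (2 * lam) : ℝ) : EReal)

namespace IsProxMap

variable {φ : H → EReal} {lam : ℝ} {prox : H → H}

theorem apply_ne_top (hprox : IsProxMap φ lam prox) (u : H) {v : H} (hv : φ v ≠ ⊤) :
    φ (prox u) ≠ ⊤ := by
  intro h
  have h' := hprox u v
  rw [h, EReal.top_add_coe] at h'
  exact (EReal.add_lt_top hv (EReal.coe_ne_top _)).ne (top_le_iff.mp h')

theorem toReal_add_le (hprox : IsProxMap φ lam prox) (hφnebot : ∀ v : H, φ v ≠ ⊥) (u : H)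
    {v : H} (hv : φ v ≠ ⊤) :
    (φ (prox u)).toReal + ‖u - prox u‖ ^ 2 / (2 * lam)
      ≤ (φ v).toReal + ‖u - v‖ ^ 2 / (2 * lam) := by
  have h := hprox u v
  rw [← EReal.coe_toReal (hprox.apply_ne_top u hv) (hφnebot _),
    ← EReal.coe_toReal hv (hφnebot v)] at h
  exact_mod_cast h

variable [InnerProductSpace ℝ H]

theorem mul_toReal_sub_le_inner (hprox : IsProxMap φ lam prox) (hlam : 0 < lam)
    (hφconv : ∀ u v : H, ∀ a b : ℝ, 0 ≤ a → 0 ≤ b → a + b = 1 →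
      φ (a • u + b • v) ≤ (a : EReal) * φ u + (b : EReal) * φ v)
    (hφnebot : ∀ v : H, φ v ≠ ⊥) (hφnetop : ∃ v : H, φ v ≠ ⊤) (u v : H) :
    lam * ((φ (prox u)).toReal - (φ (prox v)).toReal)
      ≤ inner ℝ (u - prox u) (prox u - prox v) := by
  obtain ⟨v₀, hv₀⟩ := hφnetop
  set pu := prox u
  set pv := prox v
  set I := inner ℝ (u - pu) (pu - pv)
  set N := ‖pu - pv‖ ^ 2
  have hpu : φ pu ≠ ⊤ := hprox.apply_ne_top u hv₀
  have hpv : φ pv ≠ ⊤ := hprox.apply_ne_top v hv₀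
  -- Test the minimality of `pu` against the points `pu + t • (pv - pu)` and let `t → 0⁺`.
  have hseg : ∀ t ∈ Ioc (0 : ℝ) 1,
      lam * ((φ pu).toReal - (φ pv).toReal) ≤ I + t * (N / 2) := by
    rintro t ⟨ht0, ht1⟩
    have hconv := apply_smul_add_smul_le_coe hφconv hφnebot hpu hpv (sub_nonneg.2 ht1) ht0.le
      (sub_add_cancel 1 t)
    rw [show (1 - t) • pu + t • pv = pu + t • (pv - pu) by module] at hconv
    have hwtop := ne_top_of_le_ne_top (EReal.coe_ne_top _) hconv
    have hconv' := EReal.toReal_le_toReal hconv (hφnebot _) (EReal.coe_ne_top _)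
    rw [EReal.toReal_coe] at hconv'
    have hmin := hprox.toReal_add_le hφnebot u hwtop
    have hdist : ‖u - (pu + t • (pv - pu))‖ ^ 2 = ‖u - pu‖ ^ 2 + 2 * t * I + t ^ 2 * N := by
      rw [show u - (pu + t • (pv - pu)) = (u - pu) + t • (pu - pv) by module,
        norm_add_sq_real, inner_smul_right, norm_smul, Real.norm_eq_abs, mul_pow, sq_abs]
      ring
    rw [hdist, add_div, add_div] at hmin
    have hscaled :
        lam * (2 * t * I / (2 * lam) + t ^ 2 * N / (2 * lam)) = t * (I + t * (N / 2)) := by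
      field_simp
    refine le_of_mul_le_mul_left ?_ ht0
    nlinarith
  have hlim : Tendsto (fun t : ℝ => I + t * (N / 2)) (𝓝[>] 0) (𝓝 I) := by
    refine tendsto_nhdsWithin_of_tendsto_nhds ?_
    have hcont : Continuous (fun t : ℝ => I + t * (N / 2)) := by fun_prop
    simpa using hcont.tendsto 0
  exact ge_of_tendsto hlim (eventually_of_mem (Ioc_mem_nhdsGT one_pos) hseg)

theorem norm_sub_sq_le_inner (hprox : IsProxMap φ lam prox) (hlam : 0 < lam)
    (hφconv : ∀ u v : H, ∀ a b : ℝ, 0 ≤ a → 0 ≤ b → a + b = 1 →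
      φ (a • u + b • v) ≤ (a : EReal) * φ u + (b : EReal) * φ v)
    (hφnebot : ∀ v : H, φ v ≠ ⊥) (hφnetop : ∃ v : H, φ v ≠ ⊤) (u v : H) :
    ‖prox u - prox v‖ ^ 2 ≤ inner ℝ (u - v) (prox u - prox v) := by
  have huv := hprox.mul_toReal_sub_le_inner hlam hφconv hφnebot hφnetop u v
  have hvu := hprox.mul_toReal_sub_le_inner hlam hφconv hφnebot hφnetop v u
  have hsum : inner ℝ (u - prox u) (prox u - prox v) + inner ℝ (v - prox v) (prox v - prox u)
      = inner ℝ (u - v) (prox u - prox v) - ‖prox u - prox v‖ ^ 2 := by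
    rw [← real_inner_self_eq_norm_sq, ← neg_sub (prox u) (prox v), inner_neg_right,
      ← sub_eq_add_neg, ← inner_sub_left, ← inner_sub_left]
    congr 1
    abel
  linarith

theorem norm_sub_le (hprox : IsProxMap φ lam prox) (hlam : 0 < lam)
    (hφconv : ∀ u v : H, ∀ a b : ℝ, 0 ≤ a → 0 ≤ b → a + b = 1 →
      φ (a • u + b • v) ≤ (a : EReal) * φ u + (b : EReal) * φ v)
    (hφnebot : ∀ v : H, φ v ≠ ⊥) (hφnetop : ∃ v : H, φ v ≠ ⊤) (u v : H) :
    ‖prox u - prox v‖ ≤ ‖u - v‖ := by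
  have hfirm := hprox.norm_sub_sq_le_inner hlam hφconv hφnebot hφnetop u v
  have hcs := real_inner_le_norm (u - v) (prox u - prox v)
  nlinarith [norm_nonneg (prox u - prox v), norm_nonneg (u - v)]

end IsProxMap

end Prox

theorem norm_Fnor_sub_Fnor_le {f' prox : E → E} {lam L : ℝ} (hlam : 0 < lam) (hL : 0 ≤ L)
    {z w : E} (hprox : ‖prox z - prox w‖ ≤ ‖z - w‖)
    (hf' : ‖f' (prox z) - f' (prox w)‖ ≤ L * ‖prox z - prox w‖) :
    ‖Fnor f' prox lam z - Fnor f' prox lam w‖ ≤ (L + 2 / lam) * ‖z - w‖ := by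
  have hsplit : Fnor f' prox lam z - Fnor f' prox lam w
      = (f' (prox z) - f' (prox w)) + lam⁻¹ • ((z - w) - (prox z - prox w)) := by
    simp only [Fnor]
    module
  calc ‖Fnor f' prox lam z - Fnor f' prox lam w‖
      ≤ L * ‖prox z - prox w‖ + lam⁻¹ * (‖z - w‖ + ‖prox z - prox w‖) := by
        rw [hsplit]
        refine (norm_add_le _ _).trans (add_le_add hf' ?_)
        rw [norm_smul, Real.norm_of_nonneg (inv_nonneg.2 hlam.le)]
        exact mul_le_mul_of_nonneg_left (norm_sub_le _ _) (inv_nonneg.2 hlam.le)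
    _ ≤ (L + 2 / lam) * ‖z - w‖ := by
        have := mul_le_mul_of_nonneg_left hprox hL
        have := mul_le_mul_of_nonneg_left hprox (inv_nonneg.2 hlam.le)
        rw [div_eq_mul_inv]
        linarith

theorem norm_sum_Ico_le_sup' {V : Type*} [SeminormedAddCommGroup V] (v : ℕ → V) {m n : ℕ}
    (hmn : m < n) {j : ℕ} (hj : j ∈ Set.Icc m n) :
    ‖∑ i ∈ Finset.Ico m j, v i‖ ≤ (Finset.Icc (m + 1) n).sup' (Finset.nonempty_Icc.mpr hmn)
      (fun j => ‖∑ i ∈ Finset.Ico m j, v i‖) := by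
  rcases hj.1.eq_or_lt with rfl | hmj
  · rw [Finset.Ico_self, Finset.sum_empty, norm_zero]
    exact (norm_nonneg _).trans
      (Finset.le_sup' (fun j => ‖∑ i ∈ Finset.Ico m j, v i‖) (Finset.mem_Icc.2 ⟨le_rfl, hmn⟩))
  · exact Finset.le_sup' (fun j => ‖∑ i ∈ Finset.Ico m j, v i‖) (Finset.mem_Icc.2 ⟨hmj, hj.2⟩)

/-- Bounds on the iterate displacement and aggregated error over a time window. -/
theorem stmt3
    (f' : E → E) (φ : E → EReal) (prox : E → E) (lam : ℝ)
    (hlam : 0 < lam)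
    (hφconv : ∀ u v : E, ∀ a b : ℝ, 0 ≤ a → 0 ≤ b → a + b = 1 →
      φ (a • u + b • v) ≤ (a : EReal) * φ u + (b : EReal) * φ v)
    (hφnebot : ∀ v : E, φ v ≠ ⊥) (hφnetop : ∃ v : E, φ v ≠ ⊤)
    (hprox : ∀ u v : E,
      φ (prox u) + ((‖u - prox u‖ ^ 2 / (2 * lam) : ℝ) : EReal)
        ≤ φ v + ((‖u - v‖ ^ 2 / (2 * lam) : ℝ) : EReal))
    (α : ℕ → ℝ) (hα : ∀ k, 0 < α k)
    (z x gseq e : ℕ → E)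
    (hx : ∀ k, x k = prox (z k))
    (hzrec : ∀ k, z (k + 1) = z k - α k • (gseq k + lam⁻¹ • (z k - x k)))
    (he : ∀ k, e k = gseq k - f' (x k))
    (L : ℝ) (hL : 0 ≤ L)
    (hLip : ∀ u ∈ closure (convexHull ℝ (Set.range x)),
      ∀ v ∈ closure (convexHull ℝ (Set.range x)), ‖f' u - f' v‖ ≤ L * ‖u - v‖)
    (m n : ℕ) (hmn : m < n) :
    ∀ τ τb s : ℝ,
      τ = ∑ i ∈ Finset.Ico m n, α i →
      τb = (L + 2 / lam) * Real.exp ((L + 2 / lam) * τ) →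
      s = (Finset.Icc (m + 1) n).sup' (Finset.nonempty_Icc.mpr (by omega))
            (fun j => ‖∑ i ∈ Finset.Ico m j, α i • e i‖) →
      ((Finset.Icc (m + 1) n).sup' (Finset.nonempty_Icc.mpr (by omega)) (fun i => ‖x i - x m‖)
          ≤ (Finset.Icc (m + 1) n).sup' (Finset.nonempty_Icc.mpr (by omega)) (fun i => ‖z i - z m‖) ∧
        (Finset.Icc (m + 1) n).sup' (Finset.nonempty_Icc.mpr (by omega)) (fun i => ‖z i - z m‖)
          ≤ (1 + τ * τb) * (τ * ‖Fnor f' prox lam (z m)‖ + s)) ∧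
      ‖z n - z m + τ • Fnor f' prox lam (z m)‖
          ≤ τb * τ ^ 2 * ‖Fnor f' prox lam (z m)‖ + (1 + τb * τ) * s := by
  intro τ τb s hτ hτb hs
  set C := L + 2 / lam
  have hC : 0 ≤ C := by positivity
  have hα₀ : ∀ i, 0 ≤ α i := fun i => (hα i).le
  have hnonexp : ∀ u v, ‖prox u - prox v‖ ≤ ‖u - v‖ :=
    IsProxMap.norm_sub_le hprox hlam hφconv hφnebot hφnetop
  have hstep : ∀ k, z (k + 1) = z k - α k • (Fnor f' prox lam (z k) + e k) := fun k => by
    rw [hzrec, he, hx]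
    simp only [Fnor]
    module
  have hG : ∀ i ∈ Finset.Ico m n,
      ‖Fnor f' prox lam (z m) - Fnor f' prox lam (z i)‖ ≤ C * ‖z i - z m‖ := fun i _ => by
    have hmem (k : ℕ) : x k ∈ closure (convexHull ℝ (Set.range x)) :=
      subset_closure (subset_convexHull ℝ _ (Set.mem_range_self k))
    rw [norm_sub_rev (z i)]
    refine norm_Fnor_sub_Fnor_le hlam hL (hnonexp _ _) ?_
    simpa only [← hx] using hLip _ (hmem m) _ (hmem i)
  have hs' : ∀ j ∈ Set.Icc m n, ‖∑ i ∈ Finset.Ico m j, α i • e i‖ ≤ s := fun j hj =>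
    hs ▸ norm_sum_Ico_le_sup' _ hmn hj
  have hs0 : 0 ≤ s := by simpa using hs' m ⟨le_rfl, hmn.le⟩
  have hτ₀ : 0 ≤ τ := hτ ▸ Finset.sum_nonneg fun i _ => hα₀ i
  refine ⟨⟨Finset.sup'_mono_fun fun i _ => ?_, Finset.sup'_le _ _ fun i hi => ?_⟩, ?_⟩
  · simpa only [hx] using hnonexp (z i) (z m)
  · have hi := Finset.mem_Icc.1 hi
    calc ‖z i - z m‖ ≤ (τ * ‖Fnor f' prox lam (z m)‖ + s) * exp (C * τ) :=
          hτ ▸ norm_sub_le_mul_exp hstep hα₀ hC hG hs' ⟨by omega, hi.2⟩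
      _ ≤ (1 + τ * τb) * (τ * ‖Fnor f' prox lam (z m)‖ + s) := by
          rw [mul_comm, hτb]
          gcongr
          linarith [Real.exp_le_one_add_mul_exp (C * τ)]
  · calc ‖z n - z m + τ • Fnor f' prox lam (z m)‖
        ≤ C * τ * (τ * ‖Fnor f' prox lam (z m)‖ + s) * exp (C * τ) + s :=
          hτ ▸ norm_sub_add_sum_smul_le_mul_exp hstep hα₀ hC hmn.le hG hs'
      _ = τb * τ ^ 2 * ‖Fnor f' prox lam (z m)‖ + (1 + τb * τ) * s := by
          rw [hτb]
          ring
end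

section
/- Suppose there is L ≥ 0 such that ‖∇f(u) − ∇f(v)‖ ≤ L‖u − v‖ for all u, v in the closed convex hull of {x^k : k ∈ ℕ}. Then for all natural numbers 0 ≤ m < n: ψ(x^n) − ψ(x^m) ≤ (L/2 − 1/λ)·‖x^n − x^m‖² + ⟨F_nor(z^m), x^n − x^m⟩ + (1/λ)·⟨z^n − z^m, x^n − x^m⟩. -/
open MeasureTheory Filter Real Set Topology
open scoped ENNReal NNReal

variable {d : ℕ}

local notation "E" => EuclideanSpace ℝ (Fin d)
local notation "⟪" x ", " y "⟫" => @inner ℝ _ _ x y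

/-!
Split `ψ = f + φ`. The descent lemma along the segment `[x^m, x^n]` bounds `f(x^n) - f(x^m)`, and
the optimality of `x^n = prox(z^n)` against the points `x^n + t (x^m - x^n)`, divided by `t` and
with `t → 0⁺`, gives the subgradient inequality
`φ(x^n) - φ(x^m) ≤ ⟨z^n - x^n, x^n - x^m⟩ / λ`. Writing
`z^n - x^n = (z^m - x^m) + (z^n - z^m) - (x^n - x^m)` turns the sum of the two bounds into the
claimed one, with `F_nor(z^m) = ∇f(x^m) + (z^m - x^m)/λ` collecting the first-order terms.
-/

theorem le_of_forall_le_add_mul {a b c : ℝ} (h : ∀ t ∈ Ioc (0 : ℝ) 1, a ≤ b + t * c) :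
    a ≤ b := by
  have hlim : Tendsto (fun t : ℝ => b + t * c) (𝓝[>] 0) (𝓝 b) := by
    have : Tendsto (fun t : ℝ => b + t * c) (𝓝 0) (𝓝 (b + 0 * c)) :=
      (continuous_const.add (continuous_id.mul continuous_const)).tendsto 0
    simpa using this.mono_left nhdsWithin_le_nhds
  exact ge_of_tendsto hlim (eventually_of_mem (Ioc_mem_nhdsGT zero_lt_one) h)

theorem ne_top_of_prox {α : Type*} {φ : α → EReal} {c : α → ℝ} {p v : α}
    (hp : φ p + ((c p : ℝ) : EReal) ≤ φ v + ((c v : ℝ) : EReal)) (hv : φ v ≠ ⊤) : φ p ≠ ⊤ :=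
  fun h => by simpa [h] using hp.trans_lt (EReal.add_lt_top hv (EReal.coe_ne_top _))

section

variable {F : Type*} [NormedAddCommGroup F] [InnerProductSpace ℝ F]

theorem le_add_inner_add_of_norm_gradient_sub_le [CompleteSpace F] {f : F → ℝ} {f' : F → F}
    {x y : F} {L : ℝ}
    (hf : ∀ v ∈ segment ℝ x y, HasGradientAt f (f' v) v)
    (hLip : ∀ v ∈ segment ℝ x y, ‖f' v - f' x‖ ≤ L * ‖v - x‖) :
    f y ≤ f x + ⟪f' x, y - x⟫ + L / 2 * ‖y - x‖ ^ 2 := by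
  set d := y - x
  have hseg : ∀ s ∈ Icc (0 : ℝ) 1, x + s • d ∈ segment ℝ x y := fun s hs =>
    (segment_eq_image' ℝ x y).symm ▸ mem_image_of_mem _ hs
  let g : ℝ → ℝ := fun s => f (x + s • d) - s * ⟪f' x, d⟫ - L * ‖d‖ ^ 2 / 2 * s ^ 2
  have hg : ∀ s ∈ Icc (0 : ℝ) 1,
      HasDerivAt g (⟪f' (x + s • d), d⟫ - ⟪f' x, d⟫ - L * ‖d‖ ^ 2 * s) s := by
    intro s hs
    have hline : HasDerivAt (fun s : ℝ => x + s • d) d s := by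
      simpa using ((hasDerivAt_id s).smul_const d).const_add x
    have hfline := (hf _ (hseg s hs)).hasFDerivAt.comp_hasDerivAt s hline
    simp only [InnerProductSpace.toDual_apply_apply] at hfline
    refine ((hfline.sub ((hasDerivAt_id s).mul_const ⟪f' x, d⟫)).sub
      ((hasDerivAt_pow 2 s).const_mul (L * ‖d‖ ^ 2 / 2))).congr_deriv ?_
    push_cast
    ring
  have hanti : AntitoneOn g (Icc 0 1) := by
    refine antitoneOn_of_hasDerivWithinAt_nonpos (convex_Icc 0 1)
      (fun s hs => (hg s hs).continuousAt.continuousWithinAt)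
      (fun s hs => (hg s (interior_subset hs)).hasDerivWithinAt) fun s hs => ?_
    rw [interior_Icc] at hs
    have hLs : ‖f' (x + s • d) - f' x‖ ≤ L * (s * ‖d‖) := by
      simpa [norm_smul, abs_of_pos hs.1] using hLip _ (hseg s (Ioo_subset_Icc_self hs))
    have hcs := real_inner_le_norm (f' (x + s • d) - f' x) d
    rw [inner_sub_left] at hcs
    nlinarith [norm_nonneg d]
  have h01 := hanti (left_mem_Icc.2 zero_le_one) (right_mem_Icc.2 zero_le_one) zero_le_one
  simp only [g, zero_smul, one_smul, add_zero, zero_mul, sub_zero, one_pow, mul_one, one_mul,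
    ne_eq, OfNat.ofNat_ne_zero, not_false_eq_true, zero_pow, mul_zero, d, add_sub_cancel] at h01
  linarith

theorem toReal_sub_toReal_le_inner_of_prox {φ : F → EReal} {lam : ℝ} (hlam : 0 < lam)
    (hφconv : ∀ u v : F, ∀ a b : ℝ, 0 ≤ a → 0 ≤ b → a + b = 1 →
      φ (a • u + b • v) ≤ (a : EReal) * φ u + (b : EReal) * φ v)
    {u p y : F} (hp : ∀ v : F,
      φ p + ((‖u - p‖ ^ 2 / (2 * lam) : ℝ) : EReal) ≤ φ v + ((‖u - v‖ ^ 2 / (2 * lam) : ℝ) : EReal))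
    (hpbot : φ p ≠ ⊥) (hybot : φ y ≠ ⊥) (hytop : φ y ≠ ⊤) :
    (φ p).toReal - (φ y).toReal ≤ lam⁻¹ * ⟪u - p, p - y⟫ := by
  lift φ p to ℝ using ⟨ne_top_of_prox (c := fun v => ‖u - v‖ ^ 2 / (2 * lam)) (hp y) hytop,
    hpbot⟩ with a ha
  lift φ y to ℝ using ⟨hytop, hybot⟩ with b hb
  simp only [EReal.toReal_coe]
  refine le_of_forall_le_add_mul (c := ‖y - p‖ ^ 2 / (2 * lam)) fun t ht => ?_
  have hconv := hφconv p y (1 - t) t (by linarith [ht.2]) ht.1.le (by ring)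
  rw [← ha, ← hb] at hconv
  have hreal : a + ‖u - p‖ ^ 2 / (2 * lam)
      ≤ (1 - t) * a + t * b + ‖u - ((1 - t) • p + t • y)‖ ^ 2 / (2 * lam) := by
    exact_mod_cast (hp _).trans (add_le_add_left hconv _)
  have hexpand : ‖u - ((1 - t) • p + t • y)‖ ^ 2
      = ‖u - p‖ ^ 2 - 2 * t * ⟪u - p, y - p⟫ + t ^ 2 * ‖y - p‖ ^ 2 := by
    rw [show u - ((1 - t) • p + t • y) = (u - p) - t • (y - p) by module, norm_sub_sq_real,
      real_inner_smul_right, norm_smul, Real.norm_eq_abs, abs_of_pos ht.1]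
    ring
  rw [hexpand] at hreal
  have hflip : ⟪u - p, p - y⟫ = -⟪u - p, y - p⟫ := by
    rw [← inner_neg_right, neg_sub]
  rw [hflip]
  have hdiv : (‖u - p‖ ^ 2 - 2 * t * ⟪u - p, y - p⟫ + t ^ 2 * ‖y - p‖ ^ 2) / (2 * lam)
      = ‖u - p‖ ^ 2 / (2 * lam) - t * (lam⁻¹ * ⟪u - p, y - p⟫)
        + t * (t * (‖y - p‖ ^ 2 / (2 * lam))) := by
    field_simp
  rw [hdiv] at hreal
  have key : t * (a - b + lam⁻¹ * ⟪u - p, y - p⟫) ≤ t * (t * (‖y - p‖ ^ 2 / (2 * lam))) := by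
    linarith
  linarith [le_of_mul_le_mul_left key ht.1]

end

theorem stmt4_general
    (f : E → ℝ) (f' : E → E) (φ : E → EReal) (prox : E → E) (lam : ℝ)
    (hlam : 0 < lam)
    (hf : ∀ v : E, HasGradientAt f (f' v) v)
    (hφconv : ∀ u v : E, ∀ a b : ℝ, 0 ≤ a → 0 ≤ b → a + b = 1 →
      φ (a • u + b • v) ≤ (a : EReal) * φ u + (b : EReal) * φ v)
    (hφnebot : ∀ v : E, φ v ≠ ⊥) (hφnetop : ∃ v : E, φ v ≠ ⊤)
    (hprox : ∀ u v : E,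
      φ (prox u) + ((‖u - prox u‖ ^ 2 / (2 * lam) : ℝ) : EReal)
        ≤ φ v + ((‖u - v‖ ^ 2 / (2 * lam) : ℝ) : EReal))
    (z x : ℕ → E)
    (hx : ∀ k, x k = prox (z k))
    (L : ℝ)
    (hLip : ∀ u ∈ closure (convexHull ℝ (Set.range x)),
      ∀ v ∈ closure (convexHull ℝ (Set.range x)), ‖f' u - f' v‖ ≤ L * ‖u - v‖)
    (m n : ℕ) :
    psiR f φ (x n) - psiR f φ (x m) ≤
      (L / 2 - 1 / lam) * ‖x n - x m‖ ^ 2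
        + ⟪Fnor f' prox lam (z m), x n - x m⟫
        + (1 / lam) * ⟪z n - z m, x n - x m⟫ := by
  obtain ⟨v₀, hv₀⟩ := hφnetop
  have hxm_ne_top : φ (x m) ≠ ⊤ :=
    ne_top_of_prox (c := fun v => ‖z m - v‖ ^ 2 / (2 * lam)) (hx m ▸ hprox (z m) v₀) hv₀
  have hφ : (φ (x n)).toReal - (φ (x m)).toReal ≤ lam⁻¹ * ⟪z n - x n, x n - x m⟫ :=
    toReal_sub_toReal_le_inner_of_prox hlam hφconv (by simpa only [hx] using hprox (z n))
      (hφnebot _) (hφnebot _) hxm_ne_top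
  have hseg : segment ℝ (x m) (x n) ⊆ closure (convexHull ℝ (Set.range x)) :=
    (segment_subset_convexHull (mem_range_self m) (mem_range_self n)).trans subset_closure
  have hdesc : f (x n) ≤ f (x m) + ⟪f' (x m), x n - x m⟫ + L / 2 * ‖x n - x m‖ ^ 2 :=
    le_add_inner_add_of_norm_gradient_sub_le (fun v _ => hf v) fun v hv =>
      hLip v (hseg hv) (x m) (hseg (left_mem_segment ℝ _ _))
  have hsplit : ⟪z n - x n, x n - x m⟫
      = ⟪z m - x m, x n - x m⟫ + ⟪z n - z m, x n - x m⟫ - ‖x n - x m‖ ^ 2 := by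
    rw [show z n - x n = (z m - x m) + (z n - z m) - (x n - x m) by abel, inner_sub_left,
      inner_add_left, real_inner_self_eq_norm_sq]
  simp only [psiR, Fnor, ← hx, inner_add_left, real_inner_smul_left]
  rw [hsplit] at hφ
  rw [one_div]
  linarith

/-- Descent-type estimate for the objective function. -/
theorem stmt4
    (f : E → ℝ) (f' : E → E) (φ : E → EReal) (prox : E → E) (lam : ℝ)
    (hlam : 0 < lam)
    (hf : ∀ v : E, HasGradientAt f (f' v) v) (hf'cont : Continuous f')
    (hφconv : ∀ u v : E, ∀ a b : ℝ, 0 ≤ a → 0 ≤ b → a + b = 1 →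
      φ (a • u + b • v) ≤ (a : EReal) * φ u + (b : EReal) * φ v)
    (hφlsc : LowerSemicontinuous φ)
    (hφnebot : ∀ v : E, φ v ≠ ⊥) (hφnetop : ∃ v : E, φ v ≠ ⊤)
    (hprox : ∀ u v : E,
      φ (prox u) + ((‖u - prox u‖ ^ 2 / (2 * lam) : ℝ) : EReal)
        ≤ φ v + ((‖u - v‖ ^ 2 / (2 * lam) : ℝ) : EReal))
    (α : ℕ → ℝ) (hα : ∀ k, 0 < α k)
    (z x gseq e : ℕ → E)
    (hx : ∀ k, x k = prox (z k))
    (hzrec : ∀ k, z (k + 1) = z k - α k • (gseq k + lam⁻¹ • (z k - x k)))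
    (he : ∀ k, e k = gseq k - f' (x k))
    (L : ℝ) (hL : 0 ≤ L)
    (hLip : ∀ u ∈ closure (convexHull ℝ (Set.range x)),
      ∀ v ∈ closure (convexHull ℝ (Set.range x)), ‖f' u - f' v‖ ≤ L * ‖u - v‖)
    (m n : ℕ) (hmn : m < n) :
    psiR f φ (x n) - psiR f φ (x m) ≤
      (L / 2 - 1 / lam) * ‖x n - x m‖ ^ 2
        + ⟪Fnor f' prox lam (z m), x n - x m⟫
        + (1 / lam) * ⟪z n - z m, x n - x m⟫ :=
  stmt4_general f f' φ prox lam hlam hf hφconv hφnebot hφnetop hprox z x hx L hLip m n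
end

section
/- Suppose there is L ≥ 0 such that ‖∇f(u) − ∇f(v)‖ ≤ L‖u − v‖ for all u, v in the closed convex hull of {x^k : k ∈ ℕ}. Then for all natural numbers 0 ≤ m < n, writing τ := τ_{m,n} and e := e^{m,n}: ‖F_nor(z^n)‖² ≤ (1 − τ/λ)²·‖F_nor(z^m)‖² + (L² + 2L/λ + 1/λ²)·‖x^n − x^m‖² + (1/λ²)·‖e‖² + (2/λ)·(1 − τ/λ)·⟨F_nor(z^m), λ(∇f(x^n) − ∇f(x^m)) − (x^n − x^m) + e⟩ + (2/λ)·⟨∇f(x^n) − ∇f(x^m), e⟩ − (2/λ²)·⟨e, x^n − x^m⟩. -/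
open MeasureTheory Filter Real Set Topology
open scoped ENNReal NNReal

variable {d : ℕ}

local notation "E" => EuclideanSpace ℝ (Fin d)
local notation "⟪" x ", " y "⟫" => @inner ℝ _ _ x y

/-! The inequality is an expansion of `‖F_nor(z^n)‖²` along the identity
`F_nor(z^n) = (1 - τ/λ) F_nor(z^m) + (∇f(x^n) - ∇f(x^m)) - (x^n - x^m)/λ + e/λ`,
which holds for any two points once `e` is defined as `z^n - z^m + τ F_nor(z^m)`;
the only estimate needed is the Lipschitz bound on `∇f(x^n) - ∇f(x^m)`. -/

section InnerProductSpace

variable {F : Type*} [NormedAddCommGroup F] [InnerProductSpace ℝ F]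

lemma norm_sub_inv_smul_sq_le {lam L : ℝ} (hlam : 0 < lam) {D w : F}
    (hD : ‖D‖ ≤ L * ‖w‖) :
    ‖D - lam⁻¹ • w‖ ^ 2 ≤ (L ^ 2 + 2 * L / lam + 1 / lam ^ 2) * ‖w‖ ^ 2 := by
  have hDsq : ‖D‖ ^ 2 ≤ L ^ 2 * ‖w‖ ^ 2 := by
    rw [← mul_pow]; exact pow_le_pow_left₀ (norm_nonneg D) hD 2
  have hinner : -⟪D, w⟫ ≤ L * ‖w‖ ^ 2 := by
    have := neg_le_of_abs_le (abs_real_inner_le_norm D w)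
    nlinarith [norm_nonneg w]
  have hcross : lam⁻¹ * -⟪D, w⟫ ≤ lam⁻¹ * (L * ‖w‖ ^ 2) :=
    mul_le_mul_of_nonneg_left hinner (inv_nonneg.mpr hlam.le)
  rw [norm_sub_sq_real, real_inner_smul_right, norm_smul, mul_pow, Real.norm_eq_abs, sq_abs]
  have : (L ^ 2 + 2 * L / lam + 1 / lam ^ 2) * ‖w‖ ^ 2
      = L ^ 2 * ‖w‖ ^ 2 + 2 * (lam⁻¹ * (L * ‖w‖ ^ 2)) + lam⁻¹ ^ 2 * ‖w‖ ^ 2 := by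
    field_simp
  linarith

lemma norm_smul_add_sq_le {lam L : ℝ} (hlam : 0 < lam) (c : ℝ) (B D w e : F)
    (hD : ‖D‖ ≤ L * ‖w‖) :
    ‖c • B + (D - lam⁻¹ • w + lam⁻¹ • e)‖ ^ 2 ≤
      c ^ 2 * ‖B‖ ^ 2 + (L ^ 2 + 2 * L / lam + 1 / lam ^ 2) * ‖w‖ ^ 2
        + (1 / lam ^ 2) * ‖e‖ ^ 2
        + (2 / lam) * c * ⟪B, lam • D - w + e⟫
        + (2 / lam) * ⟪D, e⟫ - (2 / lam ^ 2) * ⟪e, w⟫ := by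
  have hcross : ⟪c • B, D - lam⁻¹ • w + lam⁻¹ • e⟫ = c * lam⁻¹ * ⟪B, lam • D - w + e⟫ := by
    have hfactor : D - lam⁻¹ • w + lam⁻¹ • e = lam⁻¹ • (lam • D - w + e) := by
      rw [smul_add, smul_sub, inv_smul_smul₀ hlam.ne']
    rw [hfactor, real_inner_smul_left, real_inner_smul_right]
    ring
  have hexpand : ‖c • B + (D - lam⁻¹ • w + lam⁻¹ • e)‖ ^ 2
      = c ^ 2 * ‖B‖ ^ 2 + (2 / lam) * c * ⟪B, lam • D - w + e⟫
        + ‖D - lam⁻¹ • w‖ ^ 2 + (1 / lam ^ 2) * ‖e‖ ^ 2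
        + (2 / lam) * ⟪D, e⟫ - (2 / lam ^ 2) * ⟪e, w⟫ := by
    rw [norm_add_sq_real, hcross, norm_add_sq_real (D - lam⁻¹ • w)]
    simp only [norm_smul, mul_pow, Real.norm_eq_abs, sq_abs, real_inner_smul_left,
      real_inner_smul_right, inner_sub_left, real_inner_comm w e]
    field_simp
    ring
  rw [hexpand]
  linarith [norm_sub_inv_smul_sq_le hlam hD]

end InnerProductSpace

lemma Fnor_eq_smul_add (f' prox : E → E) {lam : ℝ} (hlam : lam ≠ 0) (τ : ℝ) (z z' : E) :
    Fnor f' prox lam z' = (1 - τ / lam) • Fnor f' prox lam z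
      + (f' (prox z') - f' (prox z) - lam⁻¹ • (prox z' - prox z)
        + lam⁻¹ • (z' - z + τ • Fnor f' prox lam z)) := by
  simp only [Fnor]
  match_scalars <;> field_simp <;> ring

theorem stmt5_general
    (f' : E → E) (prox : E → E) (lam : ℝ)
    (hlam : 0 < lam)
    (α : ℕ → ℝ)
    (z x : ℕ → E)
    (hx : ∀ k, x k = prox (z k))
    (L : ℝ)
    (hLip : ∀ u ∈ closure (convexHull ℝ (Set.range x)),
      ∀ v ∈ closure (convexHull ℝ (Set.range x)), ‖f' u - f' v‖ ≤ L * ‖u - v‖)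
    (m n : ℕ) :
    ∀ (τ : ℝ) (emn : E),
      τ = ∑ i ∈ Finset.Ico m n, α i →
      emn = z n - z m + τ • Fnor f' prox lam (z m) →
      ‖Fnor f' prox lam (z n)‖ ^ 2 ≤
        (1 - τ / lam) ^ 2 * ‖Fnor f' prox lam (z m)‖ ^ 2
          + (L ^ 2 + 2 * L / lam + 1 / lam ^ 2) * ‖x n - x m‖ ^ 2
          + (1 / lam ^ 2) * ‖emn‖ ^ 2
          + (2 / lam) * (1 - τ / lam) *
              ⟪Fnor f' prox lam (z m), lam • (f' (x n) - f' (x m)) - (x n - x m) + emn⟫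
          + (2 / lam) * ⟪f' (x n) - f' (x m), emn⟫
          - (2 / lam ^ 2) * ⟪emn, x n - x m⟫ := by
  intro τ emn _ hemn
  have hmem : ∀ k, x k ∈ closure (convexHull ℝ (Set.range x)) :=
    fun k => subset_closure (subset_convexHull ℝ _ (Set.mem_range_self k))
  rw [Fnor_eq_smul_add f' prox hlam.ne' τ (z m) (z n), ← hx m, ← hx n, ← hemn]
  exact norm_smul_add_sq_le hlam _ _ _ _ _ (hLip _ (hmem n) _ (hmem m))

/-- Technical upper bound for the normal map along the trajectory. -/
theorem stmt5
    (f : E → ℝ) (f' : E → E) (φ : E → EReal) (prox : E → E) (lam : ℝ)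
    (hlam : 0 < lam)
    (hf : ∀ v : E, HasGradientAt f (f' v) v) (hf'cont : Continuous f')
    (hφconv : ∀ u v : E, ∀ a b : ℝ, 0 ≤ a → 0 ≤ b → a + b = 1 →
      φ (a • u + b • v) ≤ (a : EReal) * φ u + (b : EReal) * φ v)
    (hφlsc : LowerSemicontinuous φ)
    (hφnebot : ∀ v : E, φ v ≠ ⊥) (hφnetop : ∃ v : E, φ v ≠ ⊤)
    (hprox : ∀ u v : E,
      φ (prox u) + ((‖u - prox u‖ ^ 2 / (2 * lam) : ℝ) : EReal)
        ≤ φ v + ((‖u - v‖ ^ 2 / (2 * lam) : ℝ) : EReal))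
    (α : ℕ → ℝ) (hα : ∀ k, 0 < α k)
    (z x gseq e : ℕ → E)
    (hx : ∀ k, x k = prox (z k))
    (hzrec : ∀ k, z (k + 1) = z k - α k • (gseq k + lam⁻¹ • (z k - x k)))
    (he : ∀ k, e k = gseq k - f' (x k))
    (L : ℝ) (hL : 0 ≤ L)
    (hLip : ∀ u ∈ closure (convexHull ℝ (Set.range x)),
      ∀ v ∈ closure (convexHull ℝ (Set.range x)), ‖f' u - f' v‖ ≤ L * ‖u - v‖)
    (m n : ℕ) (hmn : m < n) :
    ∀ (τ : ℝ) (emn : E),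
      τ = ∑ i ∈ Finset.Ico m n, α i →
      emn = z n - z m + τ • Fnor f' prox lam (z m) →
      ‖Fnor f' prox lam (z n)‖ ^ 2 ≤
        (1 - τ / lam) ^ 2 * ‖Fnor f' prox lam (z m)‖ ^ 2
          + (L ^ 2 + 2 * L / lam + 1 / lam ^ 2) * ‖x n - x m‖ ^ 2
          + (1 / lam ^ 2) * ‖emn‖ ^ 2
          + (2 / lam) * (1 - τ / lam) *
              ⟪Fnor f' prox lam (z m), lam • (f' (x n) - f' (x m)) - (x n - x m) + emn⟫
          + (2 / lam) * ⟪f' (x n) - f' (x m), emn⟫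
          - (2 / lam ^ 2) * ⟪emn, x n - x m⟫ :=
  stmt5_general f' prox lam hlam α z x hx L hLip m n
end

section
/- Let {α_k} be positive step sizes with α_k → 0 and Σ_k α_k = ∞, let T > 0, δ ∈ (0,1), K ∈ ℕ, and let {m_k} ⊂ ℕ be strictly increasing with δT ≤ Σ_{i=m_k}^{m_{k+1}−1} α_i ≤ T for all k ≥ K. Set γ_k := Σ_{i=0}^{k−1} α_i. Let g : (0,∞) → (0,∞) be differentiable on some interval [ι,∞) with g′(x) > 0 for all x ≥ ι. Then there exists N ∈ ℕ such that for all n ≥ N: (a) δTk ≤ γ_{m_{n+k}} − γ_{m_n} ≤ Tk for all k ∈ ℕ; and (b) for every ϑ ∈ (0,1), Σ_{k=n}^∞ g(γ_{m_k})^{−2ϑ} ≤ g(γ_{m_n})^{−2ϑ} + (δT)^{−1}·∫_{γ_{m_n}}^∞ g(t)^{−2ϑ} dt, where the sum and the integral are interpreted in [0,∞]. -/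
open MeasureTheory Filter Real Set Topology
open scoped ENNReal NNReal

/-!
Part (a) telescopes the window bounds. For part (b), once `γ (m n)` lies beyond `max ι 1`,
`u ↦ g u ^ (-2ϑ)` is antitone, so each term with index `k + 1` is at most the mean of that
function over `[γ (m (n + k)), γ (m (n + k + 1)))`, an interval of length at least `δ T`; these
intervals are disjoint and lie in `[γ (m n), ∞)`.
-/

lemma mul_le_sub_of_le_sub_succ {b : ℕ → ℝ} {c : ℝ} {n : ℕ}
    (h : ∀ k ≥ n, c ≤ b (k + 1) - b k) (k : ℕ) : c * k ≤ b (n + k) - b n := by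
  induction k with
  | zero => simp
  | succ k ih =>
    have := h (n + k) (Nat.le_add_right n k)
    push_cast
    rw [← add_assoc]
    linarith

lemma sub_le_mul_of_sub_succ_le {b : ℕ → ℝ} {c : ℝ} {n : ℕ}
    (h : ∀ k ≥ n, b (k + 1) - b k ≤ c) (k : ℕ) : b (n + k) - b n ≤ c * k := by
  have := mul_le_sub_of_le_sub_succ (b := fun i => -b i) (c := -c)
    (fun k hk => by linarith [h k hk]) k
  linarith

lemma monotoneOn_Ici_of_hasDerivWithinAt_pos {g : ℝ → ℝ} {ι : ℝ}
    (hg : ∀ u ≥ ι, ∃ d > (0 : ℝ), HasDerivWithinAt g d (Ici ι) u) :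
    MonotoneOn g (Ici ι) := by
  choose! g' hg'pos hg' using hg
  refine monotoneOn_of_hasDerivWithinAt_nonneg (f' := g') (convex_Ici ι)
    (fun u hu => (hg' u hu).continuousWithinAt) (fun u hu => ?_) (fun u hu => ?_)
  · rw [interior_Ici] at hu ⊢
    exact (hg' u hu.le).mono Ioi_subset_Ici_self
  · rw [interior_Ici] at hu
    exact (hg'pos u hu.le).le

lemma antitoneOn_rpow_neg {g : ℝ → ℝ} {s : Set ℝ} {p : ℝ} (hg : MonotoneOn g s)
    (hpos : ∀ u ∈ s, 0 < g u) (hp : 0 ≤ p) : AntitoneOn (fun u => g u ^ (-p)) s :=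
  fun _ hx _ hy hxy => rpow_le_rpow_of_nonpos (hpos _ hx) (hg hx hy hxy) (by linarith)

lemma ofReal_sub_mul_le_setLIntegral_Ico {f : ℝ → ℝ} {x y b : ℝ}
    (hf : ∀ u ∈ Ico x y, b ≤ f u) :
    ENNReal.ofReal (y - x) * ENNReal.ofReal b ≤ ∫⁻ u in Ico x y, ENNReal.ofReal (f u) := by
  calc ENNReal.ofReal (y - x) * ENNReal.ofReal b
      = ∫⁻ _ in Ico x y, ENNReal.ofReal b := by rw [setLIntegral_const, Real.volume_Ico, mul_comm]
    _ ≤ _ := setLIntegral_mono' measurableSet_Ico fun u hu => ENNReal.ofReal_le_ofReal (hf u hu)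

lemma tsum_setLIntegral_Ico_le_setLIntegral_Ici {a : ℕ → ℝ} (ha : Monotone a) (F : ℝ → ℝ≥0∞) :
    ∑' k, ∫⁻ u in Ico (a k) (a (k + 1)), F u ≤ ∫⁻ u in Ici (a 0), F u := by
  have hdisj : Pairwise (Function.onFun Disjoint fun k => Ico (a k) (a (k + 1))) := by
    simpa only [Order.succ_eq_add_one] using ha.pairwise_disjoint_on_Ico_succ
  rw [← lintegral_iUnion (fun _ => measurableSet_Ico) hdisj]
  exact lintegral_mono_set (iUnion_subset fun k =>
    Ico_subset_Ici_self.trans (Ici_subset_Ici.2 (ha k.zero_le)))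

/-- The integral test, for sample points whose gaps are at least `c`. -/
lemma tsum_ofReal_le_add_inv_mul_setLIntegral_Ici {f : ℝ → ℝ} {a : ℕ → ℝ} {c : ℝ}
    (hc : 0 < c) (ha : ∀ k, c ≤ a (k + 1) - a k) (hf : AntitoneOn f (Ici (a 0))) :
    ∑' k, ENNReal.ofReal (f (a k)) ≤
      ENNReal.ofReal (f (a 0)) + ENNReal.ofReal c⁻¹ * ∫⁻ u in Ici (a 0), ENNReal.ofReal (f u) := by
  have hmono : Monotone a := monotone_nat_of_le_succ fun k => by linarith [ha k]
  have hterm : ∀ k, ENNReal.ofReal (f (a (k + 1))) ≤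
      ENNReal.ofReal c⁻¹ * ∫⁻ u in Ico (a k) (a (k + 1)), ENNReal.ofReal (f u) := by
    intro k
    rw [ENNReal.ofReal_inv_of_pos hc, ← ENNReal.mul_le_iff_le_inv (by simpa using hc)
      ENNReal.ofReal_ne_top]
    calc ENNReal.ofReal c * ENNReal.ofReal (f (a (k + 1)))
        ≤ ENNReal.ofReal (a (k + 1) - a k) * ENNReal.ofReal (f (a (k + 1))) := by
          gcongr; exact ha k
      _ ≤ _ := ofReal_sub_mul_le_setLIntegral_Ico fun u hu =>
          hf (hmono k.zero_le |>.trans hu.1) (hmono k.zero_le |>.trans (hu.1.trans hu.2.le))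
            hu.2.le
  calc ∑' k, ENNReal.ofReal (f (a k))
      = ENNReal.ofReal (f (a 0)) + ∑' k, ENNReal.ofReal (f (a (k + 1))) :=
        tsum_eq_zero_add' ENNReal.summable
    _ ≤ ENNReal.ofReal (f (a 0)) +
        ∑' k, ENNReal.ofReal c⁻¹ * ∫⁻ u in Ico (a k) (a (k + 1)), ENNReal.ofReal (f u) := by
        gcongr with k; exact hterm k
    _ ≤ _ := by
        rw [ENNReal.tsum_mul_left]
        gcongr
        exact tsum_setLIntegral_Ico_le_setLIntegral_Ici hmono _

theorem stmt13_general (α : ℕ → ℝ)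
    (hdiv : Tendsto (fun N => ∑ k ∈ Finset.range N, α k) atTop atTop)
    (T δ : ℝ) (hT : 0 < T) (hδ : δ ∈ Set.Ioo (0 : ℝ) 1)
    (K : ℕ) (m : ℕ → ℕ) (hm : StrictMono m)
    (hwin : ∀ k ≥ K, δ * T ≤ ∑ i ∈ Finset.Ico (m k) (m (k + 1)), α i ∧
      ∑ i ∈ Finset.Ico (m k) (m (k + 1)), α i ≤ T)
    (γ : ℕ → ℝ) (hγ : ∀ k, γ k = ∑ i ∈ Finset.range k, α i)
    (g : ℝ → ℝ) (hgpos : ∀ u : ℝ, 0 < u → 0 < g u)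
    (ι : ℝ)
    (hg' : ∀ u ≥ ι, ∃ dv > (0 : ℝ), HasDerivWithinAt g dv (Set.Ici ι) u) :
    ∃ N : ℕ, ∀ n ≥ N,
      (∀ k : ℕ, δ * T * k ≤ γ (m (n + k)) - γ (m n) ∧ γ (m (n + k)) - γ (m n) ≤ T * k) ∧
      ∀ ϑ : ℝ, ϑ ∈ Set.Ioo (0 : ℝ) 1 →
        (∑' k : ℕ, ENNReal.ofReal ((g (γ (m (n + k)))) ^ (-(2 * ϑ)))) ≤
          ENNReal.ofReal ((g (γ (m n))) ^ (-(2 * ϑ))) +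
            ENNReal.ofReal (δ * T)⁻¹ *
              ∫⁻ u in Set.Ici (γ (m n)), ENNReal.ofReal ((g u) ^ (-(2 * ϑ))) := by
  have hδT : 0 < δ * T := mul_pos hδ.1 hT
  have hstep : ∀ k ≥ K, δ * T ≤ γ (m (k + 1)) - γ (m k) ∧ γ (m (k + 1)) - γ (m k) ≤ T := by
    intro k hk
    rw [hγ, hγ, ← Finset.sum_Ico_eq_sub _ (hm k.lt_succ_self).le]
    exact hwin k hk
  have hγm : Tendsto (fun n => γ (m n)) atTop atTop :=
    (hdiv.comp hm.tendsto_atTop).congr fun n => (hγ (m n)).symm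
  obtain ⟨N₀, hN₀⟩ := (hγm.eventually_ge_atTop (max ι 1)).exists_forall_of_atTop
  have hanti : ∀ ϑ ∈ Ioo (0 : ℝ) 1,
      AntitoneOn (fun u => g u ^ (-(2 * ϑ))) (Ici (max ι 1)) := fun ϑ hϑ =>
    antitoneOn_rpow_neg
      ((monotoneOn_Ici_of_hasDerivWithinAt_pos hg').mono (Ici_subset_Ici.2 (le_max_left _ _)))
      (fun u hu => hgpos u (lt_of_lt_of_le one_pos ((le_max_right _ _).trans hu)))
      (by linarith [hϑ.1])
  refine ⟨max K N₀, fun n hn => ⟨fun k => ⟨?_, ?_⟩, fun ϑ hϑ => ?_⟩⟩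
  · exact mul_le_sub_of_le_sub_succ (b := fun i => γ (m i))
      (fun i hi => (hstep i ((le_max_left _ _).trans (hn.trans hi))).1) k
  · exact sub_le_mul_of_sub_succ_le (b := fun i => γ (m i))
      (fun i hi => (hstep i ((le_max_left _ _).trans (hn.trans hi))).2) k
  · simpa using tsum_ofReal_le_add_inv_mul_setLIntegral_Ici (a := fun k => γ (m (n + k))) hδT
      (fun k => (hstep (n + k) ((le_max_left _ _).trans (hn.trans (Nat.le_add_right n k)))).1)
      ((hanti ϑ hϑ).mono (Ici_subset_Ici.2 (hN₀ n ((le_max_right _ _).trans hn))))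

/-- Step size and error estimates over time windows. -/
theorem stmt13 (α : ℕ → ℝ) (hα : ∀ k, 0 < α k)
    (hα0 : Tendsto α atTop (nhds 0))
    (hdiv : Tendsto (fun N => ∑ k ∈ Finset.range N, α k) atTop atTop)
    (T δ : ℝ) (hT : 0 < T) (hδ : δ ∈ Set.Ioo (0 : ℝ) 1)
    (K : ℕ) (m : ℕ → ℕ) (hm : StrictMono m)
    (hwin : ∀ k ≥ K, δ * T ≤ ∑ i ∈ Finset.Ico (m k) (m (k + 1)), α i ∧
      ∑ i ∈ Finset.Ico (m k) (m (k + 1)), α i ≤ T)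
    (γ : ℕ → ℝ) (hγ : ∀ k, γ k = ∑ i ∈ Finset.range k, α i)
    (g : ℝ → ℝ) (hgpos : ∀ u : ℝ, 0 < u → 0 < g u)
    (ι : ℝ)
    (hg' : ∀ u ≥ ι, ∃ dv > (0 : ℝ), HasDerivWithinAt g dv (Set.Ici ι) u) :
    ∃ N : ℕ, ∀ n ≥ N,
      (∀ k : ℕ, δ * T * k ≤ γ (m (n + k)) - γ (m n) ∧ γ (m (n + k)) - γ (m n) ≤ T * k) ∧
      ∀ ϑ : ℝ, ϑ ∈ Set.Ioo (0 : ℝ) 1 →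
        (∑' k : ℕ, ENNReal.ofReal ((g (γ (m (n + k)))) ^ (-(2 * ϑ)))) ≤
          ENNReal.ofReal ((g (γ (m n))) ^ (-(2 * ϑ))) +
            ENNReal.ofReal (δ * T)⁻¹ *
              ∫⁻ u in Set.Ici (γ (m n)), ENNReal.ofReal ((g u) ^ (-(2 * ϑ))) :=
  stmt13_general α hdiv T δ hT hδ K m hm hwin γ hγ g hgpos ι hg'
end

section
/- (Generalized Chung's lemma.) Let s, t : ℝ → (0,∞) and let {a_k} ⊂ ℝ and {b_k} ⊂ ℝ be sequences with a_{k+1} ≤ (1 − 1/s(b_k))·a_k + 1/t(b_k) for all k. Assume: (i) there is ι ∈ ℝ such that s and t are continuously differentiable on I := (ι,∞) and s(x) > 1 for all x ∈ I, and the mapping κ := s/t is non-increasing and convex on I; (ii) b_k → ∞ and there are B > 0 and K ∈ ℕ with b_{k+1} ≤ b_k + B for all k ≥ K, and Σ_{k=0}^∞ 1/s(b_k) = ∞; (iii) there is β ∈ (0,1) such that B·(s′(x) − κ(x)·t′(x)) ≥ −1 + β for all x ∈ I. Then limsup_{k→∞} a_k/κ(b_k) < ∞. -/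
open MeasureTheory Filter Real Set Topology
open scoped ENNReal NNReal

/-!
With `κ = s / t`, the tangent-line inequality for the convex `κ`, the derivative bound and the
monotonicity of `κ` give `κ (b k) * (1 - (1 - β) / s (b k)) ≤ κ (b (k + 1))` for large `k`. With
`1 / t = κ / s` this makes `a k ≤ M * κ (b k)` propagate along the recursion as soon as
`1 ≤ M * β`, so `a k / κ (b k)` stays below `max (a N / κ (b N)) (1 / β)`.
-/

theorem ConvexOn.add_mul_le_of_hasDerivAt {S : Set ℝ} {f : ℝ → ℝ} {f' x h : ℝ}
    (hf : ConvexOn ℝ S f) (hx : x ∈ S) (hxh : x + h ∈ S) (h0 : 0 < h)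
    (hfd : HasDerivAt f f' x) : f x + h * f' ≤ f (x + h) := by
  have hslope := hf.le_slope_of_hasDerivAt hx hxh (by linarith) hfd
  rw [slope_def_field, add_sub_cancel_left, le_div_iff₀ h0] at hslope
  linarith

theorem div_mul_one_sub_le_div_of_convexOn {S : Set ℝ} {s t : ℝ → ℝ} {s' t' x B β : ℝ}
    (hsx : 0 < s x) (htx : 0 < t x) (hs' : HasDerivAt s s' x) (ht' : HasDerivAt t t' x)
    (hconv : ConvexOn ℝ S (fun y => s y / t y)) (hx : x ∈ S) (hxB : x + B ∈ S) (hB : 0 < B)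
    (hderiv : B * (s' - (s x / t x) * t') ≥ -1 + β) :
    s x / t x * (1 - (1 - β) / s x) ≤ s (x + B) / t (x + B) := by
  have hκ' := hs'.div ht' htx.ne'
  have htangent := hconv.add_mul_le_of_hasDerivAt hx hxB hB hκ'
  have hquot : (s' * t x - s x * t') / t x ^ 2 = (s' - s x / t x * t') / t x := by
    field_simp
  have hlin : (β - 1) / t x ≤ B * ((s' - s x / t x * t') / t x) := by
    rw [← mul_div_assoc]
    exact div_le_div_of_nonneg_right (by linarith) htx.le
  calc s x / t x * (1 - (1 - β) / s x) = s x / t x + (β - 1) / t x := by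
        field_simp; ring
    _ ≤ s (x + B) / t (x + B) := by rw [hquot] at htangent; linarith

theorem le_mul_of_chung_step {a a' w w' σ M β : ℝ} (hw : 0 < w) (hσ : 1 ≤ σ) (hM : 0 ≤ M)
    (hMβ : 1 ≤ M * β) (ha : a ≤ M * w) (hrec : a' ≤ (1 - 1 / σ) * a + w / σ)
    (hgrowth : w * (1 - (1 - β) / σ) ≤ w') : a' ≤ M * w' := by
  have hσ0 : 0 < σ := by linarith
  have hcontract : 0 ≤ 1 - 1 / σ := by
    rw [sub_nonneg, div_le_one hσ0]
    exact hσ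
  calc a' ≤ (1 - 1 / σ) * a + w / σ := hrec
    _ ≤ (1 - 1 / σ) * (M * w) + w / σ := by gcongr
    _ = M * (w * (1 - (1 - β) / σ)) - w / σ * (M * β - 1) := by field_simp; ring
    _ ≤ M * (w * (1 - (1 - β) / σ)) := by
        have : 0 ≤ w / σ * (M * β - 1) := mul_nonneg (by positivity) (by linarith)
        linarith
    _ ≤ M * w' := by gcongr

theorem isBoundedUnder_div_of_chung_rec {a w σ : ℕ → ℝ} {β : ℝ} (hβ : 0 < β)
    (hw : ∀ k, 0 < w k) (hσ : ∀ᶠ k in atTop, 1 ≤ σ k)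
    (hrec : ∀ k, a (k + 1) ≤ (1 - 1 / σ k) * a k + w k / σ k)
    (hgrowth : ∀ᶠ k in atTop, w k * (1 - (1 - β) / σ k) ≤ w (k + 1)) :
    IsBoundedUnder (· ≤ ·) atTop (fun k => a k / w k) := by
  obtain ⟨N, hN⟩ := eventually_atTop.mp (hσ.and hgrowth)
  set M := max (a N / w N) (1 / β)
  have hMβ : 1 ≤ M * β := by
    rw [← div_le_iff₀ hβ]
    exact le_max_right _ _
  have hM : 0 ≤ M := (one_div_pos.mpr hβ).le.trans (le_max_right _ _)
  have hbound : ∀ k ≥ N, a k / w k ≤ M := by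
    intro k hk
    induction k, hk using Nat.le_induction with
    | base => exact le_max_left _ _
    | succ k hk ih =>
      rw [div_le_iff₀ (hw _)] at ih ⊢
      exact le_mul_of_chung_step (hw k) (hN k hk).1 hM hMβ ih (hrec k) (hN k hk).2
  exact ⟨M, eventually_map.mpr (eventually_atTop.mpr ⟨N, hbound⟩)⟩

theorem generalized_chung_general (s t : ℝ → ℝ) (hs : ∀ x, 0 < s x) (ht : ∀ x, 0 < t x)
    (a b : ℕ → ℝ)
    (hrec : ∀ k, a (k + 1) ≤ (1 - 1 / s (b k)) * a k + 1 / t (b k))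
    (ι : ℝ) (s' t' : ℝ → ℝ)
    (hs' : ∀ x ∈ Set.Ioi ι, HasDerivAt s (s' x) x)
    (ht' : ∀ x ∈ Set.Ioi ι, HasDerivAt t (t' x) x)
    (hs1 : ∀ x ∈ Set.Ioi ι, 1 < s x)
    (hκanti : AntitoneOn (fun x => s x / t x) (Set.Ioi ι))
    (hκconv : ConvexOn ℝ (Set.Ioi ι) (fun x => s x / t x))
    (hb : Tendsto b atTop atTop)
    (B : ℝ) (hB : 0 < B) (K : ℕ) (hbB : ∀ k ≥ K, b (k + 1) ≤ b k + B)
    (β : ℝ) (hβ : β ∈ Set.Ioo (0 : ℝ) 1)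
    (hderiv : ∀ x ∈ Set.Ioi ι, B * (s' x - (s x / t x) * t' x) ≥ -1 + β) :
    IsBoundedUnder (· ≤ ·) atTop (fun k => a k / (s (b k) / t (b k))) := by
  have hinv_t : ∀ x, 1 / t x = s x / t x / s x := fun x => by
    field_simp [(hs x).ne']
  have hbι : ∀ᶠ k in atTop, ι < b k := hb.eventually_gt_atTop ι
  refine isBoundedUnder_div_of_chung_rec hβ.1 (fun k => div_pos (hs _) (ht _))
    (hbι.mono fun k hk => (hs1 _ hk).le) (fun k => hinv_t (b k) ▸ hrec k) ?_
  filter_upwards [hbι, (tendsto_add_atTop_nat 1).eventually hbι,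
    eventually_ge_atTop K] with k hk hk1 hkK
  have hkB : b k + B ∈ Set.Ioi ι := by simp only [Set.mem_Ioi]; linarith
  exact (div_mul_one_sub_le_div_of_convexOn (hs _) (ht _) (hs' _ hk) (ht' _ hk) hκconv hk hkB hB
    (hderiv _ hk)).trans (hκanti hk1 hkB (hbB k hkK))

/-- Generalized Chung's lemma. -/
theorem generalized_chung (s t : ℝ → ℝ) (hs : ∀ x, 0 < s x) (ht : ∀ x, 0 < t x)
    (a b : ℕ → ℝ)
    (hrec : ∀ k, a (k + 1) ≤ (1 - 1 / s (b k)) * a k + 1 / t (b k))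
    (ι : ℝ) (s' t' : ℝ → ℝ)
    (hs' : ∀ x ∈ Set.Ioi ι, HasDerivAt s (s' x) x)
    (ht' : ∀ x ∈ Set.Ioi ι, HasDerivAt t (t' x) x)
    (hs'cont : ContinuousOn s' (Set.Ioi ι)) (ht'cont : ContinuousOn t' (Set.Ioi ι))
    (hs1 : ∀ x ∈ Set.Ioi ι, 1 < s x)
    (hκanti : AntitoneOn (fun x => s x / t x) (Set.Ioi ι))
    (hκconv : ConvexOn ℝ (Set.Ioi ι) (fun x => s x / t x))
    (hb : Tendsto b atTop atTop)
    (B : ℝ) (hB : 0 < B) (K : ℕ) (hbB : ∀ k ≥ K, b (k + 1) ≤ b k + B)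
    (hsdiv : Tendsto (fun N => ∑ k ∈ Finset.range N, 1 / s (b k)) atTop atTop)
    (β : ℝ) (hβ : β ∈ Set.Ioo (0 : ℝ) 1)
    (hderiv : ∀ x ∈ Set.Ioi ι, B * (s' x - (s x / t x) * t' x) ≥ -1 + β) :
    IsBoundedUnder (· ≤ ·) atTop (fun k => a k / (s (b k) / t (b k))) :=
  generalized_chung_general s t hs ht a b hrec ι s' t' hs' ht' hs1 hκanti hκconv hb B hB K hbB β hβ
    hderiv
end

section
/- Let ϑ ∈ [1/2, 1), r > 0, c > T > 0, δ ∈ (0,1) and K ∈ ℕ. Let {y_k} be a sequence of nonnegative reals and {ν_k} a sequence of positive reals such that ν_k → ∞, ν_n + δTk ≤ ν_{n+k} ≤ ν_n + Tk for all n ≥ K and all k ∈ ℕ, and y_{k+1} ≤ y_k − (T/c)·y_k^{2ϑ} + (T/c)·ν_k^{−4rϑ} for all k ≥ K. Then limsup_{k→∞} y_k·ν_k^{q} < ∞, where q := 2r if ϑ < (1+2r)/(4r) and q := 1/(2ϑ−1) if ϑ ≥ (1+2r)/(4r). -/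
open MeasureTheory Filter Real Set Topology
open scoped ENNReal NNReal

lemma step19 (T c p q s C' y y' ν ν' : ℝ)
    (hT : 0 < T) (hc : 0 < c) (hq : 0 < q) (hp : 1 ≤ p) (hC' : 0 < C')
    (hy : 0 ≤ y) (hy' : 0 ≤ y') (hν : 1 ≤ ν)
    (hνν' : ν ≤ ν') (hν'T : ν' ≤ ν + T)
    (hrec : y' ≤ y - T / c * y ^ p + T / c * ν ^ (-s))
    (hqs : q ≤ s) (hpq : p * q ≤ s)
    (hC2 : 2 ≤ C' ^ p)
    (hstar : 2 * max q 1 * c ≤ C' ^ (p - 1) * ν ^ (1 - (p - 1) * q)) :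
    y' * ν' ^ q ≤ max (y * ν ^ q) ((C' + T / c) * (1 + T) ^ q) := by
  have hν0 : (0:ℝ) < ν := lt_of_lt_of_le one_pos hν
  have hν'0 : (0:ℝ) < ν' := hν0.trans_le hνν'
  have ha : (0:ℝ) < T / c := div_pos hT hc
  set Q := max q 1 with hQdef
  have hQq : q ≤ Q := le_max_left _ _
  have hQ1 : (1:ℝ) ≤ Q := le_max_right _ _
  by_cases hyw : y ≤ C' * ν ^ (-q)
  · -- small branch
    have h1 : y' ≤ (C' + T / c) * ν ^ (-q) := by
      have h2 : ν ^ (-s) ≤ ν ^ (-q) := rpow_le_rpow_of_exponent_le hν (by linarith)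
      have h3 : 0 ≤ T / c * y ^ p := mul_nonneg ha.le (rpow_nonneg hy p)
      have h4 : T / c * ν ^ (-s) ≤ T / c * ν ^ (-q) :=
        mul_le_mul_of_nonneg_left h2 ha.le
      nlinarith [hrec]
    have h5 : ν' ≤ (1 + T) * ν := by nlinarith
    have h6 : ν' ^ q ≤ (1 + T) ^ q * ν ^ q := by
      rw [← Real.mul_rpow (by linarith) hν0.le]
      exact rpow_le_rpow hν'0.le h5 hq.le
    have h7 : y' * ν' ^ q ≤ (C' + T / c) * ν ^ (-q) * ((1 + T) ^ q * ν ^ q) :=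
      mul_le_mul h1 h6 (rpow_nonneg hν'0.le q) (by positivity)
    have h8 : (C' + T / c) * ν ^ (-q) * ((1 + T) ^ q * ν ^ q)
        = (C' + T / c) * (1 + T) ^ q := by
      have : ν ^ (-q) * ν ^ q = 1 := by
        rw [← Real.rpow_add hν0]; simp
      calc (C' + T / c) * ν ^ (-q) * ((1 + T) ^ q * ν ^ q)
          = (C' + T / c) * (1 + T) ^ q * (ν ^ (-q) * ν ^ q) := by ring
        _ = (C' + T / c) * (1 + T) ^ q := by rw [this, mul_one]
    exact le_max_of_le_right (h7.trans_eq h8)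
  · -- large branch: z decreases
    push_neg at hyw
    set w := C' * ν ^ (-q) with hwdef
    have hw0 : 0 < w := by positivity
    have hy0 : 0 < y := hw0.trans hyw
    -- claim 1 : 2 * ν^(-s) ≤ y^p
    have hwp : w ^ p ≤ y ^ p := rpow_le_rpow hw0.le hyw.le (by linarith)
    have hwp_eq : w ^ p = C' ^ p * ν ^ (-q * p) := by
      rw [hwdef, Real.mul_rpow hC'.le (rpow_nonneg hν0.le _), ← Real.rpow_mul hν0.le]
    have hexp1 : ν ^ (-s) ≤ ν ^ (-q * p) :=
      rpow_le_rpow_of_exponent_le hν (by nlinarith)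
    have claim1 : 2 * ν ^ (-s) ≤ y ^ p := by
      have : 2 * ν ^ (-s) ≤ C' ^ p * ν ^ (-q * p) :=
        mul_le_mul hC2 hexp1 (rpow_nonneg hν0.le _) (by positivity)
      linarith [hwp_eq ▸ hwp]
    -- claim 2 : 2 * Q * c * (y / ν) ≤ y ^ p
    have hyp_split : y ^ p = y ^ (p - 1) * y := by
      conv_lhs => rw [show p = (p - 1) + 1 by ring]
      rw [Real.rpow_add hy0, Real.rpow_one]
    have hwp1 : w ^ (p - 1) ≤ y ^ (p - 1) := rpow_le_rpow hw0.le hyw.le (by linarith)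
    have hwp1_eq : w ^ (p - 1) = C' ^ (p - 1) * ν ^ (-q * (p - 1)) := by
      rw [hwdef, Real.mul_rpow hC'.le (rpow_nonneg hν0.le _), ← Real.rpow_mul hν0.le]
    have hstar' : 2 * Q * c * ν ^ (-(1:ℝ)) ≤ C' ^ (p - 1) * ν ^ (-q * (p - 1)) := by
      calc 2 * Q * c * ν ^ (-(1:ℝ))
          ≤ C' ^ (p - 1) * ν ^ (1 - (p - 1) * q) * ν ^ (-(1:ℝ)) :=
            mul_le_mul_of_nonneg_right hstar (rpow_nonneg hν0.le _)
        _ = C' ^ (p - 1) * ν ^ (-q * (p - 1)) := by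
            rw [mul_assoc, ← Real.rpow_add hν0]; ring_nf
    have claim2 : 2 * Q * c * y * ν ^ (-(1:ℝ)) ≤ y ^ p := by
      have h1 : 2 * Q * c * ν ^ (-(1:ℝ)) ≤ y ^ (p - 1) := le_trans (hstar'.trans_eq hwp1_eq.symm) hwp1
      calc 2 * Q * c * y * ν ^ (-(1:ℝ)) = (2 * Q * c * ν ^ (-(1:ℝ))) * y := by ring
        _ ≤ y ^ (p - 1) * y := mul_le_mul_of_nonneg_right h1 hy0.le
        _ = y ^ p := hyp_split.symm
    have hνinv : ν ^ (-(1:ℝ)) = 1 / ν := by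
      rw [Real.rpow_neg_one]; exact (one_div ν).symm
    -- decrease of y'
    have hdec : y' ≤ y * (1 - Q * T / ν) := by
      have h1 : Q * c * y * (1 / ν) ≤ y ^ p - ν ^ (-s) := by
        rw [hνinv] at claim2; nlinarith [claim1, claim2]
      have h2 : T / c * (Q * c * y * (1 / ν)) ≤ T / c * (y ^ p - ν ^ (-s)) :=
        mul_le_mul_of_nonneg_left h1 ha.le
      have h3 : T / c * (Q * c * y * (1 / ν)) = y * (Q * T / ν) := by
        field_simp
      have h5 : T / c * (y ^ p - ν ^ (-s)) = T / c * y ^ p - T / c * ν ^ (-s) := by ring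
      have h6 : y * (1 - Q * T / ν) = y - y * (Q * T / ν) := by ring
      linarith
    -- Bernoulli / ratio bound
    set t := ν / ν' with htdef
    have ht0 : 0 < t := div_pos hν0 hν'0
    have ht1 : t ≤ 1 := div_le_one_of_le₀ hνν' hν'0.le
    have h1t : 1 - t ≤ T / ν := by
      have e1 : 1 - t = (ν' - ν) / ν' := by
        rw [htdef, sub_div, div_self hν'0.ne']
      rw [e1]
      exact div_le_div₀ (by linarith) (by linarith) hν0 hνν'
    have hfrac : 1 - Q * T / ν ≤ t ^ q := by
      rcases le_or_gt q 1 with hq1 | hq1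
      · have hQ : Q = 1 := max_eq_right hq1
        have : t ^ (1:ℝ) ≤ t ^ q := rpow_le_rpow_of_exponent_ge ht0 ht1 hq1
        rw [Real.rpow_one] at this
        have hTν : Q * T / ν = T / ν := by rw [hQ, one_mul]
        rw [hTν]; linarith
      · have hQ : Q = q := max_eq_left hq1.le
        have hb : 1 + q * (t - 1) ≤ (1 + (t - 1)) ^ q :=
          one_add_mul_self_le_rpow_one_add (by linarith) hq1.le
        have e1 : (1 + (t - 1)) = t := by ring
        rw [e1] at hb
        have h2 : q * (1 - t) ≤ q * (T / ν) := mul_le_mul_of_nonneg_left h1t (by linarith)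
        have h3 : Q * T / ν = q * (T / ν) := by rw [hQ]; ring
        have h4 : q * (t - 1) = -(q * (1 - t)) := by ring
        linarith
    have hkey : y' ≤ y * t ^ q := by
      have : y * (1 - Q * T / ν) ≤ y * t ^ q := mul_le_mul_of_nonneg_left hfrac hy0.le
      linarith [hdec]
    have hfin : y' * ν' ^ q ≤ y * ν ^ q := by
      have h1 : y' * ν' ^ q ≤ y * t ^ q * ν' ^ q :=
        mul_le_mul_of_nonneg_right hkey (rpow_nonneg hν'0.le q)
      have h2 : y * t ^ q * ν' ^ q = y * ν ^ q := by
        rw [htdef, Real.div_rpow hν0.le hν'0.le, mul_assoc,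
          div_mul_cancel₀ _ (rpow_pos_of_pos hν'0 q).ne']
      linarith [h2 ▸ h1]
    exact le_max_of_le_left hfin

/-- Rate estimate for the KL-type recursion. -/
theorem stmt19 (ϑ r c T δ : ℝ) (K : ℕ) (y ν : ℕ → ℝ)
    (hϑ : ϑ ∈ Set.Ico (1 / 2 : ℝ) 1) (hr : 0 < r) (hT : 0 < T) (hTc : T < c)
    (hδ : δ ∈ Set.Ioo (0 : ℝ) 1)
    (hy : ∀ k, 0 ≤ y k) (hν : ∀ k, 0 < ν k)
    (hνinf : Tendsto ν atTop atTop)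
    (hνwin : ∀ n ≥ K, ∀ k : ℕ, ν n + δ * T * k ≤ ν (n + k) ∧ ν (n + k) ≤ ν n + T * k)
    (hrec : ∀ k ≥ K, y (k + 1) ≤ y k - T / c * (y k) ^ (2 * ϑ) + T / c * (ν k) ^ (-(4 * r * ϑ))) :
    ∀ q : ℝ, q = (if ϑ < (1 + 2 * r) / (4 * r) then 2 * r else 1 / (2 * ϑ - 1)) →
      IsBoundedUnder (· ≤ ·) atTop (fun k => y k * (ν k) ^ q) := by
  intro q hqdef
  obtain ⟨hϑ1, hϑ2⟩ := hϑ
  have hc : (0:ℝ) < c := hT.trans hTc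
  set p := 2 * ϑ with hpdef
  set s := 4 * r * ϑ with hsdef
  have hp : (1:ℝ) ≤ p := by rw [hpdef]; linarith
  -- establish the key exponent facts and the choice of C' by case analysis
  have main : ∃ C' : ℝ, 0 < C' ∧ (0 < q) ∧ (q ≤ s) ∧ (p * q ≤ s) ∧ (2 ≤ C' ^ p) ∧
      (∀ᶠ k in atTop, 2 * max q 1 * c ≤ C' ^ (p - 1) * (ν k) ^ (1 - (p - 1) * q)) := by
    by_cases hcase : ϑ < (1 + 2 * r) / (4 * r)
    · rw [if_pos hcase] at hqdef
      subst hqdef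
      have h4r : ϑ * (4 * r) < 1 + 2 * r := (lt_div_iff₀ (by positivity)).mp hcase
      have hq0 : (0:ℝ) < 2 * r := by linarith
      refine ⟨2, two_pos, hq0, by nlinarith, by nlinarith, ?_, ?_⟩
      · calc (2:ℝ) = 2 ^ (1:ℝ) := (Real.rpow_one 2).symm
          _ ≤ 2 ^ p := Real.rpow_le_rpow_of_exponent_le one_le_two hp
      · have he : 0 < 1 - (p - 1) * (2 * r) := by rw [hpdef]; nlinarith
        have h2p : (1:ℝ) ≤ (2:ℝ) ^ (p - 1) := by
          calc (1:ℝ) = 2 ^ (0:ℝ) := (Real.rpow_zero 2).symm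
            _ ≤ 2 ^ (p - 1) := Real.rpow_le_rpow_of_exponent_le one_le_two (by linarith)
        have htend : Tendsto (fun k => (ν k) ^ (1 - (p - 1) * (2 * r))) atTop atTop :=
          (tendsto_rpow_atTop he).comp hνinf
        filter_upwards [htend.eventually_ge_atTop (2 * max (2 * r) 1 * c),
          hνinf.eventually_ge_atTop 1] with k hk hk1
        calc 2 * max (2 * r) 1 * c ≤ (ν k) ^ (1 - (p - 1) * (2 * r)) := hk
          _ = 1 * (ν k) ^ (1 - (p - 1) * (2 * r)) := (one_mul _).symm
          _ ≤ 2 ^ (p - 1) * (ν k) ^ (1 - (p - 1) * (2 * r)) :=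
            mul_le_mul_of_nonneg_right h2p (Real.rpow_nonneg (by linarith) _)
    · rw [if_neg hcase] at hqdef
      push_neg at hcase
      have h4r : 1 + 2 * r ≤ ϑ * (4 * r) := (div_le_iff₀ (by positivity)).mp hcase
      have h2ϑ : (0:ℝ) < 2 * ϑ - 1 := by nlinarith
      have hq0 : 0 < q := by rw [hqdef]; positivity
      have hq2r : q ≤ 2 * r := by
        rw [hqdef, div_le_iff₀ h2ϑ]; nlinarith
      have hpq1 : (p - 1) * q = 1 := by
        rw [hqdef, hpdef]; field_simp
      set Q := max q 1 with hQdef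
      have hQ0 : 0 < 2 * Q * c := by positivity
      refine ⟨2 + (2 * Q * c) ^ q, by positivity, hq0, by nlinarith, ?_, ?_, ?_⟩
      · -- p * q ≤ s
        have : p * q = q + 1 := by
          have : p * q = (p - 1) * q + q := by ring
          rw [this, hpq1]; ring
        rw [this, hsdef]
        rw [hqdef, div_add' _ _ _ h2ϑ.ne', div_le_iff₀ h2ϑ]
        nlinarith
      · have h1C : (1:ℝ) ≤ 2 + (2 * Q * c) ^ q := by
          have := Real.rpow_nonneg hQ0.le q; linarith
        calc (2:ℝ) ≤ 2 + (2 * Q * c) ^ q := by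
              have := Real.rpow_nonneg hQ0.le q; linarith
          _ = (2 + (2 * Q * c) ^ q) ^ (1:ℝ) := (Real.rpow_one _).symm
          _ ≤ (2 + (2 * Q * c) ^ q) ^ p := Real.rpow_le_rpow_of_exponent_le h1C hp
      · have hE : 1 - (p - 1) * q = 0 := by rw [hpq1]; ring
        have hkey : 2 * Q * c ≤ (2 + (2 * Q * c) ^ q) ^ (p - 1) := by
          calc 2 * Q * c = (2 * Q * c) ^ ((q) * (p - 1)) := by
                rw [mul_comm q (p-1), hpq1, Real.rpow_one]
            _ = ((2 * Q * c) ^ q) ^ (p - 1) := Real.rpow_mul hQ0.le q (p - 1)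
            _ ≤ (2 + (2 * Q * c) ^ q) ^ (p - 1) := by
                apply Real.rpow_le_rpow (Real.rpow_nonneg hQ0.le q) (by linarith) (by linarith)
        filter_upwards [hνinf.eventually_ge_atTop 1] with k hk1
        rw [hE, Real.rpow_zero, mul_one]
        exact hkey
  obtain ⟨C', hC'0, hq0, hqs, hpqs, hC2, hstarev⟩ := main
  -- get the starting index N
  have hev : ∀ᶠ k in atTop, K ≤ k ∧ 1 ≤ ν k ∧
      2 * max q 1 * c ≤ C' ^ (p - 1) * (ν k) ^ (1 - (p - 1) * q) := by
    filter_upwards [eventually_ge_atTop K, hνinf.eventually_ge_atTop 1, hstarev] with k h1 h2 h3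
    exact ⟨h1, h2, h3⟩
  obtain ⟨N, hN⟩ := eventually_atTop.mp hev
  set C := (C' + T / c) * (1 + T) ^ q with hCdef
  have hbd : ∀ k, N ≤ k → y k * (ν k) ^ q ≤ max (y N * (ν N) ^ q) C := by
    intro k hk
    induction k, hk using Nat.le_induction with
    | base => exact le_max_left _ _
    | succ k hk ih =>
      obtain ⟨hkK, hk1, hkstar⟩ := hN k hk
      obtain ⟨hwl, hwu⟩ := hνwin k hkK 1
      have hcast : ((1:ℕ):ℝ) = 1 := Nat.cast_one
      rw [hcast] at hwl hwu
      have hmono : ν k ≤ ν (k + 1) := by nlinarith [hδ.1, hδ.2]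
      have hupper : ν (k + 1) ≤ ν k + T := by linarith
      have hstep := step19 T c p q s C' (y k) (y (k + 1)) (ν k) (ν (k + 1))
        hT hc hq0 hp hC'0 (hy k) (hy (k + 1)) hk1 hmono hupper
        (hrec k hkK) hqs hpqs hC2 hkstar
      exact hstep.trans (max_le ih (le_max_right _ _))
  exact ⟨max (y N * (ν N) ^ q) C, eventually_map.mpr (eventually_atTop.mpr ⟨N, hbd⟩)⟩
end
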